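/- arXiv:2601.10483 — 8 statements merged into one kernel-verified Lean document; each statement's English description precedes it below -/
import Mathlib

section
/- Let E be a finite-dimensional real normed vector space, and let L : E → ℝ and Ω : E → ℝ be continuous functions taking nonnegative values, with Ω coercive, i.e. Ω(W) → ∞ as ‖W‖ → ∞. Assume the set S* = argmin L of global minimizers of L is nonempty. For each λ > 0, let W_λ be a global minimizer of the regularized loss L_λ = L + λΩ. Then every cluster point of the family (W_λ)_{λ>0} as λ → 0⁺ belongs to S* and minimizes Ω over S*. Moreover, if the minimizer of Ω over S* is unique, then W_λ converges to it as λ → 0⁺. -/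
open Filter Topology

/-- **Convergence of regularized minimizers as the regularization vanishes.**
If `L, Om : E → ℝ` are continuous nonnegative functions on a finite-dimensional real
normed space, `Om` is coercive, the set `S* = argmin L` is nonempty, and for each
`l > 0` the point `W l` is a global minimizer of `L + l • Om`, then every cluster
point of `(W l)` as `l → 0⁺` lies in `S*` and minimizes `Om` over `S*`; if the
minimizer of `Om` over `S*` is unique, then `W l` converges to it as `l → 0⁺`. -/
theorem small_regularization_limit
    {E : Type*} [NormedAddCommGroup E] [NormedSpace ℝ E] [FiniteDimensional ℝ E]
    (L Om : E → ℝ) (hL : Continuous L) (hOm : Continuous Om)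
    (hL0 : ∀ x, 0 ≤ L x) (hOm0 : ∀ x, 0 ≤ Om x)
    (hcoer : Tendsto Om (Filter.comap norm atTop) atTop)
    (Sstar : Set E) (hS : Sstar = {x | ∀ y, L x ≤ L y}) (hSne : Sstar.Nonempty)
    (W : ℝ → E)
    (hW : ∀ l : ℝ, 0 < l → ∀ y, L (W l) + l * Om (W l) ≤ L y + l * Om y) :
    (∀ p : E,
      (∃ ls : ℕ → ℝ, (∀ n, 0 < ls n) ∧ Tendsto ls atTop (𝓝 0) ∧
        Tendsto (fun n => W (ls n)) atTop (𝓝 p)) →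
      p ∈ Sstar ∧ ∀ y ∈ Sstar, Om p ≤ Om y) ∧
    (∀ p : E, p ∈ Sstar → (∀ y ∈ Sstar, Om p ≤ Om y) →
      (∀ q ∈ Sstar, (∀ y ∈ Sstar, Om q ≤ Om y) → q = p) →
      Tendsto W (𝓝[>] (0:ℝ)) (𝓝 p)) := by
  obtain ⟨xs, hxs⟩ := hSne
  have hxsmin : ∀ y, L xs ≤ L y := by rw [hS] at hxs; exact hxs
  -- Key bound 1: Om (W l) ≤ Om y for any y ∈ Sstar
  have hOmW : ∀ l : ℝ, 0 < l → ∀ y ∈ Sstar, Om (W l) ≤ Om y := by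
    intro l hl y hy
    rw [hS] at hy
    have h1 := hW l hl y
    have h2 : L y ≤ L (W l) := hy _
    have h3 : l * Om (W l) ≤ l * Om y := by linarith
    exact le_of_mul_le_mul_left h3 hl
  -- Key bound 2: L (W l) ≤ L xs + l * Om xs
  have hLW : ∀ l : ℝ, 0 < l → L (W l) ≤ L xs + l * Om xs := by
    intro l hl
    have h1 := hW l hl xs
    have h2 : 0 ≤ l * Om (W l) := mul_nonneg hl.le (hOm0 _)
    linarith
  -- Part 1
  have key : ∀ p : E,
      (∃ ls : ℕ → ℝ, (∀ n, 0 < ls n) ∧ Tendsto ls atTop (𝓝 0) ∧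
        Tendsto (fun n => W (ls n)) atTop (𝓝 p)) →
      p ∈ Sstar ∧ ∀ y ∈ Sstar, Om p ≤ Om y := by
    intro p ⟨ls, hpos, hls0, hWls⟩
    have hLp : Tendsto (fun n => L (W (ls n))) atTop (𝓝 (L p)) :=
      (hL.continuousAt.tendsto).comp hWls
    have hRHS : Tendsto (fun n => L xs + ls n * Om xs) atTop (𝓝 (L xs + 0 * Om xs)) :=
      tendsto_const_nhds.add (hls0.mul tendsto_const_nhds)
    have hLple : L p ≤ L xs + 0 * Om xs :=
      le_of_tendsto_of_tendsto' hLp hRHS fun n => hLW (ls n) (hpos n)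
    have hLple' : L p ≤ L xs := by linarith
    have hpmem : p ∈ Sstar := by
      rw [hS]
      exact fun y => hLple'.trans (hxsmin y)
    refine ⟨hpmem, fun y hy => ?_⟩
    have hOmp : Tendsto (fun n => Om (W (ls n))) atTop (𝓝 (Om p)) :=
      (hOm.continuousAt.tendsto).comp hWls
    exact le_of_tendsto' hOmp fun n => hOmW (ls n) (hpos n) y hy
  refine ⟨key, ?_⟩
  -- Part 2
  intro p hp hpmin huniq
  -- boundedness radius
  have hbig : ∀ᶠ x in Filter.comap norm atTop, Om xs + 1 ≤ Om x :=
    hcoer.eventually (eventually_ge_atTop (Om xs + 1))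
  rw [eventually_comap] at hbig
  obtain ⟨R, hR⟩ := eventually_atTop.mp hbig
  have hball : ∀ l : ℝ, 0 < l → W l ∈ Metric.closedBall (0 : E) R := by
    intro l hl
    simp only [Metric.mem_closedBall, dist_zero_right]
    by_contra hcon
    push_neg at hcon
    have := hR ‖W l‖ hcon.le (W l) rfl
    have h2 := hOmW l hl xs hxs
    linarith
  refine tendsto_of_subseq_tendsto fun ns hns => ?_
  have hns0 : Tendsto ns atTop (𝓝 0) := hns.mono_right nhdsWithin_le_nhds
  have hnspos : ∀ᶠ n in atTop, ns n ∈ Set.Ioi (0:ℝ) :=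
    hns.eventually self_mem_nhdsWithin
  obtain ⟨N, hN⟩ := eventually_atTop.mp hnspos
  have hfreq : ∃ᶠ n in atTop, W (ns n) ∈ Metric.closedBall (0 : E) R :=
    (hnspos.mono fun n hn => hball (ns n) hn).frequently
  obtain ⟨a, _, φ, hφ, hWa⟩ :=
    tendsto_subseq_of_frequently_bounded Metric.isBounded_closedBall hfreq
  have htail : Tendsto (fun n => φ (n + N)) atTop atTop :=
    hφ.tendsto_atTop.comp (tendsto_add_atTop_nat N)
  have hls0 : Tendsto (fun n => ns (φ (n + N))) atTop (𝓝 0) := hns0.comp htail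
  have hWls : Tendsto (fun n => W (ns (φ (n + N)))) atTop (𝓝 a) :=
    hWa.comp (tendsto_add_atTop_nat N)
  have hpos : ∀ n, 0 < ns (φ (n + N)) := fun n =>
    hN _ (le_trans (Nat.le_add_left N n) (hφ.le_apply))
  obtain ⟨haS, hamin⟩ := key a ⟨_, hpos, hls0, hWls⟩
  have : a = p := huniq a haS hamin
  exact ⟨fun n => φ (n + N), this ▸ hWls⟩
end

section
/- Let A be a real symmetric d×d matrix and let m ≤ d. Then for every real symmetric positive semidefinite d×d matrix Z with rank(Z) ≤ m, one has ‖A − A⁺₍ₘ₎‖_F ≤ ‖A − Z‖_F; that is, A⁺₍ₘ₎ is a best rank-m positive semidefinite approximation of A in Frobenius norm. -/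
open Matrix

/-- Frobenius norm of a real matrix. -/
noncomputable def frobNorm {n m : ℕ} (M : Matrix (Fin n) (Fin m) ℝ) : ℝ :=
  Real.sqrt (∑ i, ∑ j, (M i j) ^ 2)

/-!
Work with the squared Frobenius norm `tr (Mᵀ M)` and the inner product `⟨X, Y⟩ = tr (Xᵀ Y)`, and
let `A⁺ = U diag (λ⁺) Uᵀ`. As `A⁺ - A` and `Z` are positive semidefinite, `⟨A, Z⟩ ≤ ⟨A⁺, Z⟩`,
hence `‖A - Z‖² ≥ ‖A‖² - ‖A⁺‖² + ‖A⁺ - Z‖²`. If `P` is the orthogonal projection onto the range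
of `Z`, then `‖A⁺ - Z‖² ≥ ‖(1 - P) A⁺‖² = ‖A⁺‖² - tr (P A⁺²)`. The diagonal of `Uᵀ P U` lies in
`[0, 1]` and sums to `rank Z ≤ m`, so `tr (P A⁺²) ≤ ∑_{i<m} (λᵢ⁺)²` (Ky Fan). Altogether
`‖A - Z‖² ≥ ∑ λᵢ² - ∑_{i<m} (λᵢ⁺)² = ‖A - A⁺₍ₘ₎‖²`.
-/

theorem Fin.sum_mul_le_sum_ite_lt {d m : ℕ} {w c : Fin d → ℝ} (hw : Antitone w)
    (hw0 : ∀ i, 0 ≤ w i) (hc : ∀ i, c i ∈ Set.Icc (0 : ℝ) 1) (hcs : ∑ i, c i ≤ m) :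
    ∑ i, w i * c i ≤ ∑ i : Fin d, if (i : ℕ) < m then w i else 0 := by
  rcases le_or_gt d m with hdm | hmd
  · have hall (i : Fin d) : (i : ℕ) < m := i.2.trans_le hdm
    simp only [hall, if_true]
    exact Finset.sum_le_sum fun i _ => mul_le_of_le_one_right (hw0 i) (hc i).2
  · -- Compare termwise with the threshold `t = w m`.
    set t := w ⟨m, hmd⟩
    have hterm (i : Fin d) :
        w i * c i ≤
          (if (i : ℕ) < m then w i else 0) + (t * c i - if (i : ℕ) < m then t else 0) := by
      split_ifs with h
      · have : t ≤ w i := hw (Fin.le_def.mpr h.le)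
        nlinarith [(hc i).2]
      · have : w i ≤ t := hw (Fin.le_def.mpr (not_lt.mp h))
        nlinarith [(hc i).1]
    have hcount : ∑ i : Fin d, (if (i : ℕ) < m then t else 0) = m * t := by
      rw [Finset.sum_ite, Finset.sum_const_zero, add_zero, Finset.sum_const, nsmul_eq_mul,
        Fin.card_filter_val_lt, min_eq_right hmd.le]
    calc ∑ i, w i * c i
        ≤ ∑ i : Fin d,
            ((if (i : ℕ) < m then w i else 0) + (t * c i - if (i : ℕ) < m then t else 0)) :=
          Finset.sum_le_sum fun i _ => hterm i
      _ = (∑ i : Fin d, if (i : ℕ) < m then w i else 0) + t * (∑ i, c i - m) := by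
          rw [Finset.sum_add_distrib, Finset.sum_sub_distrib, hcount, ← Finset.mul_sum]; ring
      _ ≤ ∑ i : Fin d, if (i : ℕ) < m then w i else 0 := by
          nlinarith [hw0 ⟨m, hmd⟩]

theorem Fin.sum_sq_sub_ite_lt_max_zero {d m : ℕ} (x : Fin d → ℝ) :
    ∑ i, (x i - if (i : ℕ) < m then max (x i) 0 else 0) ^ 2
      = ∑ i, x i ^ 2 - ∑ i : Fin d, if (i : ℕ) < m then max (x i) 0 ^ 2 else 0 := by
  rw [← Finset.sum_sub_distrib]
  refine Finset.sum_congr rfl fun i _ => ?_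
  split_ifs
  · rcases le_total (x i) 0 with h | h <;> simp [h]
  · simp

namespace Matrix

section Trace

variable {m n R : Type*} [Fintype m] [Fintype n]

theorem sum_sq_eq_trace_transpose_mul_self [CommSemiring R] (M : Matrix m n R) :
    ∑ i, ∑ j, M i j ^ 2 = (Mᵀ * M).trace := by
  simp only [trace, diag, mul_apply, transpose_apply, sq]
  exact Finset.sum_comm

theorem trace_transpose_mul_sub [CommRing R] (X Y : Matrix m n R) :
    ((X - Y)ᵀ * (X - Y)).trace = (Xᵀ * X).trace - 2 * (Xᵀ * Y).trace + (Yᵀ * Y).trace := by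
  have hswap : (Yᵀ * X).trace = (Xᵀ * Y).trace := by
    rw [← trace_transpose, transpose_mul, transpose_transpose]
  rw [transpose_sub, Matrix.sub_mul, Matrix.mul_sub, Matrix.mul_sub, trace_sub, trace_sub,
    trace_sub, hswap]
  ring

end Trace

section Conjugation

variable {n R : Type*} [Fintype n] [DecidableEq n] [CommRing R] {U : Matrix n n R}

theorem conj_mul_conj_of_orthogonal (hU : Uᵀ * U = 1) (X Y : Matrix n n R) :
    U * X * Uᵀ * (U * Y * Uᵀ) = U * (X * Y) * Uᵀ := by
  simp only [Matrix.mul_assoc]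
  rw [← Matrix.mul_assoc Uᵀ U, hU, Matrix.one_mul]

theorem trace_conj_of_orthogonal (hU : Uᵀ * U = 1) (X : Matrix n n R) :
    (U * X * Uᵀ).trace = X.trace := by
  rw [trace_mul_cycle, hU, Matrix.one_mul]

theorem isSymm_conj_diagonal (U : Matrix n n R) (v : n → R) :
    (U * diagonal v * Uᵀ).IsSymm := by
  rw [IsSymm, transpose_mul, transpose_mul, transpose_transpose, diagonal_transpose,
    Matrix.mul_assoc]

theorem conj_diagonal_mul_self (hU : Uᵀ * U = 1) (v : n → R) :
    U * diagonal v * Uᵀ * (U * diagonal v * Uᵀ) = U * diagonal (fun i => v i ^ 2) * Uᵀ := by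
  rw [conj_mul_conj_of_orthogonal hU, diagonal_mul_diagonal]
  simp only [sq]

theorem trace_transpose_mul_self_conj_diagonal (hU : Uᵀ * U = 1) (v : n → R) :
    ((U * diagonal v * Uᵀ)ᵀ * (U * diagonal v * Uᵀ)).trace = ∑ i, v i ^ 2 := by
  rw [(isSymm_conj_diagonal U v).eq, conj_diagonal_mul_self hU, trace_conj_of_orthogonal hU,
    trace_diagonal]

end Conjugation

section Projection

variable {n : Type*} [Fintype n] {Q : Matrix n n ℝ}

theorem IsSymm.transpose_mul_mul_of_isIdempotentElem {k : Type*} [Fintype k] (hQs : Q.IsSymm)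
    (hQ : IsIdempotentElem Q) (M : Matrix n k ℝ) : (Q * M)ᵀ * (Q * M) = Mᵀ * Q * M := by
  rw [transpose_mul, hQs.eq, Matrix.mul_assoc, ← Matrix.mul_assoc Q Q M, hQ.eq, Matrix.mul_assoc]

theorem IsSymm.diag_mem_Icc_of_isIdempotentElem (hQs : Q.IsSymm) (hQ : IsIdempotentElem Q)
    (i : n) : Q i i ∈ Set.Icc (0 : ℝ) 1 := by
  have hsq : Q i i ^ 2 ≤ Q i i :=
    calc Q i i ^ 2 ≤ ∑ k, Q k i ^ 2 :=
          Finset.single_le_sum (fun k _ => sq_nonneg (Q k i)) (Finset.mem_univ i)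
      _ = Q i i := by
          conv_rhs => rw [← hQ.eq]
          simp only [mul_apply, sq, hQs.apply]
  constructor <;> nlinarith [sq_nonneg (Q i i)]

theorem IsSymm.trace_mul_diagonal_le_of_isIdempotentElem {d m : ℕ} {Q : Matrix (Fin d) (Fin d) ℝ}
    (hQs : Q.IsSymm) (hQ : IsIdempotentElem Q) (hQtr : Q.trace ≤ m) {w : Fin d → ℝ}
    (hw : Antitone w) (hw0 : ∀ i, 0 ≤ w i) :
    (Q * diagonal w).trace ≤ ∑ i : Fin d, if (i : ℕ) < m then w i else 0 := by
  have htr : (Q * diagonal w).trace = ∑ i, w i * Q i i := by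
    simp [trace, mul_comm]
  rw [htr]
  exact Fin.sum_mul_le_sum_ite_lt hw hw0 (hQs.diag_mem_Icc_of_isIdempotentElem hQ) hQtr

theorem IsSymm.trace_transpose_mul_self_sub_le [DecidableEq n] {k : Type*} [Fintype k]
    {P : Matrix n n ℝ} (hPs : P.IsSymm) (hP : IsIdempotentElem P) {X Z : Matrix n k ℝ}
    (hPZ : P * Z = Z) :
    (Xᵀ * X).trace - (Xᵀ * P * X).trace ≤ ((X - Z)ᵀ * (X - Z)).trace := by
  have hRs : (1 - P).IsSymm := isSymm_one.sub hPs
  have hRX : (1 - P) * (X - Z) = (1 - P) * X := by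
    rw [Matrix.mul_sub, Matrix.sub_mul 1 P Z, Matrix.one_mul, hPZ, sub_self, sub_zero]
  -- Split `X - Z` along `P` and `1 - P`; the second part no longer sees `Z`.
  have hsplit : ((X - Z)ᵀ * (X - Z)).trace = ((P * (X - Z))ᵀ * (P * (X - Z))).trace
      + (((1 - P) * (X - Z))ᵀ * ((1 - P) * (X - Z))).trace := by
    rw [hPs.transpose_mul_mul_of_isIdempotentElem hP,
      hRs.transpose_mul_mul_of_isIdempotentElem hP.one_sub, ← trace_add, ← Matrix.add_mul,
      ← Matrix.mul_add, add_sub_cancel]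
    simp
  have hPnonneg : 0 ≤ ((P * (X - Z))ᵀ * (P * (X - Z))).trace := by
    rw [← sum_sq_eq_trace_transpose_mul_self]; positivity
  have hR : (((1 - P) * X)ᵀ * ((1 - P) * X)).trace = (Xᵀ * X).trace - (Xᵀ * P * X).trace := by
    rw [hRs.transpose_mul_mul_of_isIdempotentElem hP.one_sub, Matrix.mul_sub, Matrix.sub_mul,
      Matrix.mul_one, trace_sub]
  rw [hsplit, hRX, hR]
  linarith

end Projection

section Spectral

variable {n : Type*} [Fintype n] [DecidableEq n]

theorem PosSemidef.trace_mul_nonneg {X Y : Matrix n n ℝ} (hX : X.PosSemidef) (hY : Y.PosSemidef) :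
    0 ≤ (X * Y).trace := by
  obtain ⟨B, rfl⟩ : ∃ B : Matrix n n ℝ, X = Bᴴ * B := by
    open MatrixOrder in exact CStarAlgebra.nonneg_iff_eq_star_mul_self.mp hX.nonneg
  rw [Matrix.mul_assoc, trace_mul_comm]
  exact (hY.mul_mul_conjTranspose_same B).trace_nonneg

theorem posSemidef_conj_diagonal (U : Matrix n n ℝ) {v : n → ℝ} (hv : ∀ i, 0 ≤ v i) :
    (U * diagonal v * Uᵀ).PosSemidef := by
  simpa only [conjTranspose_eq_transpose_of_trivial] using
    (posSemidef_diagonal_iff.mpr hv).mul_mul_conjTranspose_same U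

theorem PosSemidef.trace_conj_diagonal_mul_le {Z : Matrix n n ℝ} (hZ : Z.PosSemidef)
    (U : Matrix n n ℝ) {v v' : n → ℝ} (hvv' : ∀ i, v i ≤ v' i) :
    (U * diagonal v * Uᵀ * Z).trace ≤ (U * diagonal v' * Uᵀ * Z).trace := by
  have hgap := (posSemidef_conj_diagonal U fun i => sub_nonneg.mpr (hvv' i)).trace_mul_nonneg hZ
  rw [← diagonal_sub, Matrix.mul_sub, Matrix.sub_mul, Matrix.sub_mul, trace_sub] at hgap
  linarith

theorem IsHermitian.exists_orthogonal_conj_diagonal {Z : Matrix n n ℝ} (hZ : Z.IsHermitian) :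
    ∃ V : Matrix n n ℝ, Vᵀ * V = 1 ∧ Z = V * diagonal hZ.eigenvalues * Vᵀ := by
  refine ⟨hZ.eigenvectorUnitary, ?_, ?_⟩
  · simpa only [star_eq_conjTranspose, conjTranspose_eq_transpose_of_trivial] using
      Unitary.coe_star_mul_self hZ.eigenvectorUnitary
  · simpa [star_eq_conjTranspose, conjTranspose_eq_transpose_of_trivial] using hZ.spectral_theorem

theorem IsHermitian.exists_isSymm_isIdempotentElem_mul_eq_self {Z : Matrix n n ℝ}
    (hZ : Z.IsHermitian) :
    ∃ P : Matrix n n ℝ, P.IsSymm ∧ IsIdempotentElem P ∧ P * Z = Z ∧ P.trace = Z.rank := by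
  obtain ⟨V, hV, hZV⟩ := hZ.exists_orthogonal_conj_diagonal
  set χ : n → ℝ := fun i => if hZ.eigenvalues i = 0 then 0 else 1
  refine ⟨V * diagonal χ * Vᵀ, isSymm_conj_diagonal V χ, ?_, ?_, ?_⟩
  · have hχχ : (fun i => χ i * χ i) = χ := by
      funext i
      by_cases h : hZ.eigenvalues i = 0 <;> simp [χ, h]
    rw [IsIdempotentElem, conj_mul_conj_of_orthogonal hV, diagonal_mul_diagonal, hχχ]
  · have hχμ : (fun i => χ i * hZ.eigenvalues i) = hZ.eigenvalues := by
      funext i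
      by_cases h : hZ.eigenvalues i = 0 <;> simp [χ, h]
    conv_lhs => rw [hZV, conj_mul_conj_of_orthogonal hV, diagonal_mul_diagonal, hχμ]
    exact hZV.symm
  · rw [trace_conj_of_orthogonal hV, trace_diagonal, hZ.rank_eq_card_non_zero_eigs,
      Fintype.card_subtype, Finset.card_filter]
    push_cast
    simp [χ]

end Spectral

theorem sum_sq_sub_le_trace_transpose_mul_sub_of_rank_le {d m : ℕ}
    {U Z : Matrix (Fin d) (Fin d) ℝ} (hU : Uᵀ * U = 1) {w : Fin d → ℝ} (hw : Antitone w)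
    (hw0 : ∀ i, 0 ≤ w i) (hZ : Z.IsHermitian) (hrank : Z.rank ≤ m) :
    ∑ i, w i ^ 2 - ∑ i : Fin d, (if (i : ℕ) < m then w i ^ 2 else 0) ≤
      ((U * diagonal w * Uᵀ - Z)ᵀ * (U * diagonal w * Uᵀ - Z)).trace := by
  obtain ⟨P, hPs, hP, hPZ, hPtr⟩ := hZ.exists_isSymm_isIdempotentElem_mul_eq_self
  have hUUt : U * Uᵀ = 1 := mul_eq_one_comm.mp hU
  set Q := Uᵀ * P * U
  have hQs : Q.IsSymm := by
    simp only [Q, IsSymm, transpose_mul, transpose_transpose, hPs.eq, Matrix.mul_assoc]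
  have hQ : IsIdempotentElem Q :=
    calc Uᵀ * P * U * (Uᵀ * P * U) = Uᵀ * (P * (U * Uᵀ) * P) * U := by
          simp only [Matrix.mul_assoc]
      _ = Q := by rw [hUUt, Matrix.mul_one, hP.eq]
  have hQtr : Q.trace ≤ m := by
    rw [trace_mul_cycle, hUUt, Matrix.one_mul, hPtr]
    exact_mod_cast hrank
  set X := U * diagonal w * Uᵀ
  have hXPX : (Xᵀ * P * X).trace = (Q * diagonal (fun i => w i ^ 2)).trace := by
    rw [trace_mul_cycle, (isSymm_conj_diagonal U w).eq, conj_diagonal_mul_self hU,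
      trace_mul_cycle, trace_mul_comm]
    simp only [Q, Matrix.mul_assoc]
  have hkyFan : (Xᵀ * P * X).trace ≤ ∑ i : Fin d, if (i : ℕ) < m then w i ^ 2 else 0 := by
    rw [hXPX]
    exact hQs.trace_mul_diagonal_le_of_isIdempotentElem hQ hQtr
      (fun i j hij => pow_le_pow_left₀ (hw0 j) (hw hij) 2) (fun i => sq_nonneg (w i))
  calc ∑ i, w i ^ 2 - ∑ i : Fin d, (if (i : ℕ) < m then w i ^ 2 else 0)
      ≤ (Xᵀ * X).trace - (Xᵀ * P * X).trace := by
        rw [trace_transpose_mul_self_conj_diagonal hU]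
        linarith
    _ ≤ ((X - Z)ᵀ * (X - Z)).trace := hPs.trace_transpose_mul_self_sub_le hP hPZ

end Matrix

theorem posPart_rank_m_best_psd_approx_general
    (d m : ℕ) (A : Matrix (Fin d) (Fin d) ℝ)
    (U : Matrix (Fin d) (Fin d) ℝ) (lam : Fin d → ℝ)
    (hU : Uᵀ * U = 1) (hlam : Antitone lam)
    (hdecomp : A = U * Matrix.diagonal lam * Uᵀ)
    (B : Matrix (Fin d) (Fin d) ℝ)
    (hB : B = U * Matrix.diagonal
      (fun i : Fin d => if (i : ℕ) < m then max (lam i) 0 else 0) * Uᵀ)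
    (Z : Matrix (Fin d) (Fin d) ℝ) (hZ : Z.PosSemidef)
    (hrank : Z.rank ≤ m) :
    frobNorm (A - B) ≤ frobNorm (A - Z) := by
  subst hdecomp hB
  set ν : Fin d → ℝ := fun i => max (lam i) 0
  have hinner := hZ.trace_conj_diagonal_mul_le U (v' := ν) fun i => le_max_left (lam i) 0
  have hEY := sum_sq_sub_le_trace_transpose_mul_sub_of_rank_le hU (w := ν)
    (fun i j h => max_le_max (hlam h) le_rfl) (fun i => le_max_right _ _) hZ.isHermitian hrank
  rw [trace_transpose_mul_sub, trace_transpose_mul_self_conj_diagonal hU,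
    (isSymm_conj_diagonal U ν).eq] at hEY
  unfold frobNorm
  apply Real.sqrt_le_sqrt
  rw [sum_sq_eq_trace_transpose_mul_self, sum_sq_eq_trace_transpose_mul_self, ← Matrix.sub_mul,
    ← Matrix.mul_sub, diagonal_sub, trace_transpose_mul_self_conj_diagonal hU,
    Fin.sum_sq_sub_ite_lt_max_zero, trace_transpose_mul_sub,
    trace_transpose_mul_self_conj_diagonal hU, (isSymm_conj_diagonal U lam).eq]
  linarith

/-- **Best rank-`m` PSD approximation.** Let `A` be a real symmetric `d × d` matrix with
spectral decomposition `A = U * diagonal lam * Uᵀ`, `U` orthogonal and `lam` nonincreasing,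
and let `B = A⁺₍ₘ₎ = U * diagonal (λ₁⁺, …, λ_m⁺, 0, …, 0) * Uᵀ` for `m ≤ d`. Then for every
symmetric positive semidefinite `Z` of rank at most `m`, `‖A - B‖_F ≤ ‖A - Z‖_F`. -/
theorem posPart_rank_m_best_psd_approx
    (d m : ℕ) (hm : m ≤ d) (A : Matrix (Fin d) (Fin d) ℝ) (hA : A.IsSymm)
    (U : Matrix (Fin d) (Fin d) ℝ) (lam : Fin d → ℝ)
    (hU : Uᵀ * U = 1) (hlam : Antitone lam)
    (hdecomp : A = U * Matrix.diagonal lam * Uᵀ)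
    (B : Matrix (Fin d) (Fin d) ℝ)
    (hB : B = U * Matrix.diagonal
      (fun i : Fin d => if (i : ℕ) < m then max (lam i) 0 else 0) * Uᵀ)
    (Z : Matrix (Fin d) (Fin d) ℝ) (hZsymm : Z.IsSymm) (hZ : Z.PosSemidef)
    (hrank : Z.rank ≤ m) :
    frobNorm (A - B) ≤ frobNorm (A - Z) :=
  posPart_rank_m_best_psd_approx_general d m A U lam hU hlam hdecomp B hB Z hZ hrank
end

section
/- Let A be a real symmetric d×d matrix, λ > 0, and m ≤ d, and assume that the eigenvalues of A − λI_d are pairwise distinct and nonzero. Consider the function U(W) = ‖WWᵀ − A‖_F² + 2λ tr(WWᵀ) on ℝ^{d×m}. Then U attains its global minimum, the minimum value equals ‖(A − λI_d)⁺₍ₘ₎ − (A − λI_d)‖_F² + ‖A‖_F² − ‖A − λI_d‖_F², and a matrix W ∈ ℝ^{d×m} is a global minimizer of U if and only if WWᵀ = (A − λI_d)⁺₍ₘ₎. -/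
open Matrix

/-!
Since `C = A - l • 1`, expanding the square gives `f W = ‖W Wᵀ - C‖² + ‖A‖² - ‖C‖²`, and
conjugating by `U` reduces the problem to approximating `D = diagonal mu` by `S = W Wᵀ`. There is
an orthogonal projection `P` of trace `d - m` with `S P = 0` (onto a subspace of `ker Wᵀ`).
Splitting `mu = mu⁺ - mu⁻`,
`‖S - D‖² = ‖(S - D⁺) (1 - P)‖² + ∑ (mu i)⁺² P i i + 2 ∑ S i i (mu i)⁻ + ∑ (mu i)⁻²`,
and since the weights `P i i ∈ [0, 1]` add up to `d - m`, the second sum is at least the sum of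
the `d - m` smallest `(mu i)⁺²`. This is the lower bound `‖D⁺₍ₘ₎ - D‖²`. At equality
`S = D⁺ (1 - P)`; as `mu` is strictly decreasing, wherever `mu i > 0` we get `P i i = 0` for
`i < m` and `P i i = 1` for `i ≥ m`, so that `S = D⁺₍ₘ₎`.
-/

section Frobenius

variable {n k : ℕ}

theorem frobNorm_nonneg (M : Matrix (Fin n) (Fin k) ℝ) : 0 ≤ frobNorm M :=
  Real.sqrt_nonneg _

theorem frobNorm_sq (M : Matrix (Fin n) (Fin k) ℝ) : frobNorm M ^ 2 = (M * Mᵀ).trace := by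
  rw [frobNorm, Real.sq_sqrt (by positivity)]
  simp [trace, mul_apply, sq]

theorem frobNorm_sq_eq_zero_iff {M : Matrix (Fin n) (Fin k) ℝ} : frobNorm M ^ 2 = 0 ↔ M = 0 := by
  rw [frobNorm_sq, ← conjTranspose_eq_transpose_of_trivial,
    trace_mul_conjTranspose_self_eq_zero_iff]

theorem frobNorm_neg (M : Matrix (Fin n) (Fin k) ℝ) : frobNorm (-M) = frobNorm M := by
  simp [frobNorm]

theorem frobNorm_sq_add (X Y : Matrix (Fin n) (Fin k) ℝ) :
    frobNorm (X + Y) ^ 2 = frobNorm X ^ 2 + 2 * (X * Yᵀ).trace + frobNorm Y ^ 2 := by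
  have h : (Y * Xᵀ).trace = (X * Yᵀ).trace := by
    rw [← trace_transpose, transpose_mul, transpose_transpose]
  simp only [frobNorm_sq, transpose_add, Matrix.add_mul, Matrix.mul_add, trace_add, h]
  ring

theorem frobNorm_sq_diagonal (v : Fin n → ℝ) : frobNorm (diagonal v) ^ 2 = ∑ i, v i ^ 2 := by
  rw [frobNorm_sq]
  simp [sq]

theorem frobNorm_sq_add_smul_one (X : Matrix (Fin n) (Fin n) ℝ) (t : ℝ) :
    frobNorm (X + t • 1) ^ 2 = frobNorm X ^ 2 + 2 * t * X.trace + t ^ 2 * n := by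
  rw [frobNorm_sq_add, frobNorm_sq (t • 1)]
  simp only [transpose_smul, transpose_one, Algebra.mul_smul_comm, mul_one, trace_smul,
    smul_eq_mul, trace_one, Fintype.card_fin]
  ring

theorem frobNorm_sq_sub_add_mul_trace (X A : Matrix (Fin n) (Fin n) ℝ) (t : ℝ) :
    frobNorm (X - A) ^ 2 + 2 * t * X.trace =
      frobNorm (X - (A - t • 1)) ^ 2 + frobNorm A ^ 2 - frobNorm (A - t • 1) ^ 2 := by
  have hXA : X - (A - t • 1) = (X - A) + t • 1 := by abel
  have hA : A - t • 1 = A + (-t) • 1 := by rw [neg_smul, sub_eq_add_neg]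
  rw [hXA, hA, frobNorm_sq_add_smul_one, frobNorm_sq_add_smul_one, trace_sub]
  ring

theorem frobNorm_mul_mul_transpose {U : Matrix (Fin n) (Fin n) ℝ} (hU : Uᵀ * U = 1)
    (X : Matrix (Fin n) (Fin n) ℝ) : frobNorm (U * X * Uᵀ) = frobNorm X := by
  rw [← sq_eq_sq₀ (frobNorm_nonneg _) (frobNorm_nonneg _), frobNorm_sq, frobNorm_sq]
  simp only [transpose_mul, transpose_transpose, Matrix.mul_assoc]
  rw [← Matrix.mul_assoc Uᵀ U, hU, Matrix.one_mul, trace_mul_comm, ← Matrix.mul_assoc,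
    Matrix.mul_assoc, hU, Matrix.mul_one]

end Frobenius

theorem transpose_mul_mul_eq_iff {n R : Type*} [Fintype n] [DecidableEq n] [CommRing R]
    {U X Y : Matrix n n R} (hU : Uᵀ * U = 1) : Uᵀ * X * U = Y ↔ X = U * Y * Uᵀ := by
  have hUUt : U * Uᵀ = 1 := mul_eq_one_comm.mp hU
  constructor
  · rintro rfl
    simp only [← Matrix.mul_assoc, hUUt, Matrix.one_mul]
    rw [Matrix.mul_assoc, hUUt, Matrix.mul_one]
  · rintro rfl
    simp only [← Matrix.mul_assoc, hU, Matrix.one_mul]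
    rw [Matrix.mul_assoc, hU, Matrix.mul_one]

theorem frobNorm_sq_mul_transpose_sub_add_mul_trace {d m : ℕ} {U A : Matrix (Fin d) (Fin d) ℝ}
    {l : ℝ} {mu : Fin d → ℝ} (hU : Uᵀ * U = 1) (hdec : A - l • 1 = U * diagonal mu * Uᵀ)
    (W : Matrix (Fin d) (Fin m) ℝ) :
    frobNorm (W * Wᵀ - A) ^ 2 + 2 * l * (W * Wᵀ).trace =
      frobNorm ((Uᵀ * W) * (Uᵀ * W)ᵀ - diagonal mu) ^ 2 +
        (frobNorm A ^ 2 - frobNorm (A - l • 1) ^ 2) := by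
  have hconj : W * Wᵀ - (A - l • 1) = U * ((Uᵀ * W) * (Uᵀ * W)ᵀ - diagonal mu) * Uᵀ := by
    rw [← transpose_mul_mul_eq_iff hU, Matrix.mul_sub, Matrix.sub_mul, hdec,
      (transpose_mul_mul_eq_iff hU).2 rfl]
    simp [transpose_mul, Matrix.mul_assoc]
  rw [frobNorm_sq_sub_add_mul_trace, hconj, frobNorm_mul_mul_transpose hU]
  ring

namespace Matrix.IsSymm

section Projection

variable {n : Type*} [Fintype n] {P : Matrix n n ℝ}

theorem apply_self_eq_sum_sq (hPs : P.IsSymm) (hPi : IsIdempotentElem P) (i : n) :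
    P i i = ∑ j, P i j ^ 2 := by
  conv_lhs => rw [← hPi.eq, ← hPs.eq]
  simp only [mul_apply, transpose_apply, hPs.apply, sq]

theorem apply_self_mem_Icc (hPs : P.IsSymm) (hPi : IsIdempotentElem P) (i : n) :
    P i i ∈ Set.Icc 0 1 := by
  have hsum := hPs.apply_self_eq_sum_sq hPi i
  have hnonneg : 0 ≤ P i i := hsum ▸ Finset.sum_nonneg fun j _ => sq_nonneg (P i j)
  have hsq : P i i ^ 2 ≤ P i i :=
    hsum ▸ Finset.single_le_sum (fun j _ => sq_nonneg (P i j)) (Finset.mem_univ i)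
  exact ⟨hnonneg, by nlinarith⟩

theorem apply_eq_zero_of_apply_self_eq_zero (hPs : P.IsSymm) (hPi : IsIdempotentElem P) {i : n}
    (hi : P i i = 0) (j : n) : P i j = 0 := by
  rw [hPs.apply_self_eq_sum_sq hPi, Finset.sum_eq_zero_iff_of_nonneg fun _ _ => sq_nonneg _] at hi
  exact pow_eq_zero_iff two_ne_zero |>.mp (hi j (Finset.mem_univ j))

theorem apply_eq_one_apply_of_apply_self_eq_one [DecidableEq n] (hPs : P.IsSymm)
    (hPi : IsIdempotentElem P)
    {i : n} (hi : P i i = 1) (j : n) : P i j = (1 : Matrix n n ℝ) i j := by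
  have h := (isSymm_one.sub hPs).apply_eq_zero_of_apply_self_eq_zero hPi.one_sub (i := i)
    (by simp [hi]) j
  rwa [Matrix.sub_apply, sub_eq_zero, eq_comm] at h

end Projection

variable {n k : ℕ} {P : Matrix (Fin n) (Fin n) ℝ}

theorem frobNorm_sq_eq_mul_one_sub_add_mul (hPs : P.IsSymm) (hPi : IsIdempotentElem P)
    (X : Matrix (Fin k) (Fin n) ℝ) :
    frobNorm X ^ 2 = frobNorm (X * (1 - P)) ^ 2 + frobNorm (X * P) ^ 2 := by
  have hcross : X * (1 - P) * (X * P)ᵀ = 0 := by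
    rw [transpose_mul, hPs.eq, Matrix.mul_assoc, ← Matrix.mul_assoc (1 - P), Matrix.sub_mul,
      Matrix.one_mul, hPi.eq, sub_self, Matrix.zero_mul, Matrix.mul_zero]
  have hX : X = X * (1 - P) + X * P := by rw [← Matrix.mul_add, sub_add_cancel, Matrix.mul_one]
  conv_lhs => rw [hX]
  rw [frobNorm_sq_add, hcross, trace_zero]
  ring

theorem frobNorm_sq_diagonal_mul (hPs : P.IsSymm) (hPi : IsIdempotentElem P) (a : Fin n → ℝ) :
    frobNorm (diagonal a * P) ^ 2 = ∑ i, a i ^ 2 * P i i := by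
  rw [frobNorm_sq, transpose_mul, diagonal_transpose, hPs.eq, Matrix.mul_assoc,
    ← Matrix.mul_assoc P, hPi.eq, trace_mul_comm, Matrix.mul_assoc, diagonal_mul_diagonal]
  simp [trace, mul_diagonal, sq, mul_comm]

end Matrix.IsSymm

section WeightedSum

open Finset

variable {ι : Type*} [Fintype ι] [DecidableEq ι] {s : Finset ι} {g p : ι → ℝ}

theorem sum_mul_sub_sum_compl_eq (hsum : ∑ i, p i = #sᶜ) (c : ℝ) :
    ∑ i, g i * p i - ∑ i ∈ sᶜ, g i =
      ∑ i ∈ s, (g i - c) * p i + ∑ i ∈ sᶜ, (c - g i) * (1 - p i) := by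
  have hp := sum_add_sum_compl s p
  rw [← sum_add_sum_compl s (fun i => g i * p i)]
  simp only [sub_mul, mul_sub, mul_one, sum_sub_distrib, ← mul_sum, sum_const, nsmul_eq_mul]
  linear_combination c * (hp.trans hsum)

theorem eq_zero_of_sum_eq_card_compl_of_compl_eq_empty (hp : ∀ i, p i ∈ Set.Icc 0 1)
    (hsum : ∑ i, p i = #sᶜ) (hs : sᶜ = ∅) (i : ι) : p i = 0 := by
  rw [hs, card_empty, Nat.cast_zero, sum_eq_zero_iff_of_nonneg fun i _ => (hp i).1] at hsum
  exact hsum i (mem_univ i)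

theorem sum_compl_le_sum_mul (hp : ∀ i, p i ∈ Set.Icc 0 1) (hsum : ∑ i, p i = #sᶜ)
    (hg : ∀ i ∈ s, ∀ j ∉ s, g j ≤ g i) : ∑ i ∈ sᶜ, g i ≤ ∑ i, g i * p i := by
  rcases sᶜ.eq_empty_or_nonempty with hs | hs
  · simp [hs, eq_zero_of_sum_eq_card_compl_of_compl_eq_empty hp hsum hs]
  set c := sᶜ.sup' hs g
  have hlow : 0 ≤ ∑ i ∈ s, (g i - c) * p i := sum_nonneg fun i hi =>
    mul_nonneg (sub_nonneg.2 (sup'_le hs g fun j hj => hg i hi j (mem_compl.1 hj))) (hp i).1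
  have hhigh : 0 ≤ ∑ i ∈ sᶜ, (c - g i) * (1 - p i) := sum_nonneg fun i hi =>
    mul_nonneg (sub_nonneg.2 (le_sup' g hi)) (sub_nonneg.2 (hp i).2)
  linarith [sum_mul_sub_sum_compl_eq (g := g) hsum c]

theorem eq_zero_of_sum_mul_eq_sum_compl (hp : ∀ i, p i ∈ Set.Icc 0 1) (hsum : ∑ i, p i = #sᶜ)
    (hg : ∀ i ∈ s, ∀ j ∉ s, g j ≤ g i) (heq : ∑ i, g i * p i = ∑ i ∈ sᶜ, g i) {i : ι}
    (hi : i ∈ s) (hgi : ∀ j ∉ s, g j < g i) : p i = 0 := by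
  rcases sᶜ.eq_empty_or_nonempty with hs | hs
  · exact eq_zero_of_sum_eq_card_compl_of_compl_eq_empty hp hsum hs i
  set c := sᶜ.sup' hs g
  have hlow : ∀ k ∈ s, 0 ≤ (g k - c) * p k := fun k hk =>
    mul_nonneg (sub_nonneg.2 (sup'_le hs g fun j hj => hg k hk j (mem_compl.1 hj))) (hp k).1
  have hhigh : 0 ≤ ∑ k ∈ sᶜ, (c - g k) * (1 - p k) := sum_nonneg fun k hk =>
    mul_nonneg (sub_nonneg.2 (le_sup' g hk)) (sub_nonneg.2 (hp k).2)
  have hzero : ∑ k ∈ s, (g k - c) * p k = 0 := by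
    linarith [sum_mul_sub_sum_compl_eq (g := g) hsum c, sum_nonneg hlow]
  have hci : c < g i := (sup'_lt_iff hs).2 fun j hj => hgi j (mem_compl.1 hj)
  have hterm := (sum_eq_zero_iff_of_nonneg hlow).1 hzero i hi
  exact (mul_eq_zero.1 hterm).resolve_left (sub_ne_zero.2 hci.ne')

theorem eq_one_of_sum_eq_card_compl (hp : ∀ i, p i ≤ 1) (hsum : ∑ i, p i = #sᶜ)
    (hs : ∀ i ∈ s, p i = 0) {i : ι} (hi : i ∉ s) : p i = 1 := by
  have hzero : ∑ k ∈ sᶜ, (1 - p k) = 0 := by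
    rw [sum_sub_distrib, sum_const, nsmul_one, ← hsum, ← sum_add_sum_compl s p,
      sum_eq_zero hs, zero_add, sub_self]
  have hterm :=
    (sum_eq_zero_iff_of_nonneg fun k _ => sub_nonneg.2 (hp k)).1 hzero i (mem_compl.2 hi)
  linarith

end WeightedSum

section Factorization

variable {d m : ℕ}

theorem exists_orthonormal_columns_transpose_mul_eq_zero (W : Matrix (Fin d) (Fin m) ℝ) :
    ∃ V : Matrix (Fin d) (Fin (d - m)) ℝ, Vᵀ * V = 1 ∧ Wᵀ * V = 0 := by
  have hK : d - m ≤ Module.finrank ℝ (LinearMap.ker (toEuclideanLin Wᵀ)) := by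
    have h := LinearMap.finrank_range_add_finrank_ker (toEuclideanLin Wᵀ)
    have h' := Submodule.finrank_le (LinearMap.range (toEuclideanLin Wᵀ))
    simp only [finrank_euclideanSpace_fin] at h h'
    omega
  set b := stdOrthonormalBasis ℝ (LinearMap.ker (toEuclideanLin Wᵀ))
  set v : Fin (d - m) → EuclideanSpace ℝ (Fin d) := fun k => b (Fin.castLE hK k)
  have hv : Orthonormal ℝ v :=
    (b.orthonormal.comp _ (Fin.castLE_injective hK)).comp_linearIsometry (Submodule.subtypeₗᵢ _)
  have hvK : ∀ k, Wᵀ *ᵥ v k = 0 := fun k => congrArg WithLp.ofLp (b (Fin.castLE hK k)).2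
  refine ⟨of fun i k => v k i, ?_, ?_⟩
  · rw [← gram_eq_one_iff_orthonormal] at hv
    rw [← hv]
    ext k l
    simp only [gram, mul_apply, PiLp.inner_apply, transpose_apply, of_apply]
    refine Finset.sum_congr rfl fun i _ => ?_
    rw [RCLike.inner_apply, conj_trivial, mul_comm]
  · ext j k
    simpa [mul_apply, mulVec, dotProduct] using congrFun (hvK k) j

theorem exists_isSymm_isIdempotentElem_transpose_mul_eq_zero (W : Matrix (Fin d) (Fin m) ℝ) :
    ∃ P : Matrix (Fin d) (Fin d) ℝ,
      P.IsSymm ∧ IsIdempotentElem P ∧ Wᵀ * P = 0 ∧ P.trace = (d - m : ℕ) := by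
  obtain ⟨V, hVV, hWV⟩ := exists_orthonormal_columns_transpose_mul_eq_zero W
  refine ⟨V * Vᵀ, by simp [IsSymm, transpose_mul], ?_, ?_, ?_⟩
  · rw [IsIdempotentElem, Matrix.mul_assoc, ← Matrix.mul_assoc Vᵀ, hVV, Matrix.one_mul]
  · rw [← Matrix.mul_assoc, hWV, Matrix.zero_mul]
  · rw [trace_mul_comm, hVV, trace_one, Fintype.card_fin]

theorem exists_mul_transpose_eq_diagonal {a : Fin d → ℝ} (ha : ∀ i, 0 ≤ a i) :
    ∃ W : Matrix (Fin d) (Fin m) ℝ,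
      W * Wᵀ = diagonal fun i : Fin d => if (i : ℕ) < m then a i else 0 := by
  refine ⟨of fun (i : Fin d) (k : Fin m) => if (i : ℕ) = k then √(a i) else 0, ?_⟩
  ext i j
  simp only [mul_apply, transpose_apply, of_apply, diagonal_apply, ite_mul, zero_mul, mul_ite,
    mul_zero]
  by_cases hij : i = j
  · subst hij
    by_cases hi : (i : ℕ) < m
    · rw [Finset.sum_eq_single ⟨i, hi⟩
        (fun k _ hk => by simp only [ne_eq, Fin.ext_iff] at hk; simp [Ne.symm hk]) (by simp)]
      simp [hi, Real.mul_self_sqrt (ha i)]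
    · simp only [if_true, hi, if_false]
      exact Finset.sum_eq_zero fun k _ => by
        simp only [ite_eq_right_iff, mul_eq_zero, or_self, forall_self_imp]
        omega
  · rw [if_neg hij]
    exact Finset.sum_eq_zero fun k _ => by
      split_ifs <;> first | rfl | exact absurd (Fin.ext (by omega)) hij

end Factorization

theorem diag_mul_transpose_self_nonneg {n k : Type*} [Fintype n] [Fintype k] (W : Matrix n k ℝ)
    (i : n) :
    0 ≤ (W * Wᵀ) i i := by
  simpa using (posSemidef_self_mul_conjTranspose W).diag_nonneg (i := i)

theorem posPart_mul_negPart_eq_zero {α : Type*} [Ring α] [LinearOrder α] [IsOrderedRing α]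
    (a : α) : a⁺ * a⁻ = 0 := by
  rcases le_total a 0 with h | h <;> simp [h]

section Diagonal

open Finset

variable {d m : ℕ}

def truncatedPosPart (m : ℕ) (mu : Fin d → ℝ) : Fin d → ℝ :=
  fun i => if (i : ℕ) < m then (mu i)⁺ else 0

theorem card_compl_filter_val_lt : #({i | (i : ℕ) < m} : Finset (Fin d))ᶜ = d - m := by
  rw [card_compl, Fin.card_filter_val_lt, Fintype.card_fin]
  omega

theorem Antitone.sq_posPart {mu : Fin d → ℝ} (hmu : Antitone mu) :
    Antitone fun i => (mu i)⁺ ^ 2 := fun _ _ hij =>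
  pow_le_pow_left₀ (posPart_nonneg _) (posPart_mono (hmu hij)) 2

theorem Antitone.le_of_mem_filter_val_lt {g : Fin d → ℝ} (hg : Antitone g) :
    ∀ i ∈ ({i | (i : ℕ) < m} : Finset (Fin d)), ∀ j ∉ ({i | (i : ℕ) < m} : Finset (Fin d)),
      g j ≤ g i := fun i hi j hj => by
  simp only [mem_filter, mem_univ, true_and, not_lt] at hi hj
  exact hg (show i ≤ j by rw [Fin.le_def]; omega)

theorem frobNorm_sq_sub_diagonal_eq_of_mul_eq_zero {S P : Matrix (Fin d) (Fin d) ℝ} (hPs : P.IsSymm)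
    (hPi : IsIdempotentElem P) (hSP : S * P = 0) (mu : Fin d → ℝ) :
    frobNorm (S - diagonal mu) ^ 2 =
      frobNorm ((S - diagonal mu⁺) * (1 - P)) ^ 2 + ∑ i, (mu i)⁺ ^ 2 * P i i +
        2 * ∑ i, S i i * (mu i)⁻ + ∑ i, (mu i)⁻ ^ 2 := by
  have hsplit : S - diagonal mu = (S - diagonal mu⁺) + diagonal mu⁻ := by
    rw [sub_add, diagonal_sub]
    congr
    exact funext fun i => (posPart_sub_negPart (mu i)).symm
  have hXP : (S - diagonal mu⁺) * P = -(diagonal mu⁺ * P) := by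
    rw [Matrix.sub_mul, hSP, zero_sub]
  have hcross : ((S - diagonal mu⁺) * (diagonal mu⁻)ᵀ).trace = ∑ i, S i i * (mu i)⁻ := by
    simp [Matrix.sub_mul, diagonal_mul_diagonal, trace, mul_diagonal,
      posPart_mul_negPart_eq_zero]
  rw [hsplit, frobNorm_sq_add, hPs.frobNorm_sq_eq_mul_one_sub_add_mul hPi, hXP, frobNorm_neg,
    hPs.frobNorm_sq_diagonal_mul hPi, hcross, frobNorm_sq_diagonal]
  simp only [Pi.posPart_apply, Pi.negPart_apply]

theorem frobNorm_sq_diagonal_truncatedPosPart_sub (mu : Fin d → ℝ) :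
    frobNorm (diagonal (truncatedPosPart m mu) - diagonal mu) ^ 2 =
      ∑ i ∈ ({i | (i : ℕ) < m} : Finset (Fin d))ᶜ, (mu i)⁺ ^ 2 + ∑ i, (mu i)⁻ ^ 2 := by
  rw [diagonal_sub, frobNorm_sq_diagonal, compl_filter, sum_filter, ← sum_add_distrib]
  refine sum_congr rfl fun i _ => ?_
  have hmu := posPart_sub_negPart (mu i)
  by_cases hi : (i : ℕ) < m
  · simp only [truncatedPosPart, hi, if_true, not_true_eq_false, if_false, zero_add]
    rw [show (mu i)⁺ - mu i = (mu i)⁻ by linarith]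
  · simp only [truncatedPosPart, hi, if_false, not_false_eq_true, if_true]
    nth_rewrite 1 [← hmu]
    linear_combination (-2) * posPart_mul_negPart_eq_zero (mu i)

theorem frobNorm_sq_diagonal_truncatedPosPart_sub_le {mu : Fin d → ℝ} (hmu : Antitone mu)
    (W : Matrix (Fin d) (Fin m) ℝ) :
    frobNorm (diagonal (truncatedPosPart m mu) - diagonal mu) ^ 2 ≤
      frobNorm (W * Wᵀ - diagonal mu) ^ 2 := by
  obtain ⟨P, hPs, hPi, hWP, htr⟩ := exists_isSymm_isIdempotentElem_transpose_mul_eq_zero W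
  have hSP : W * Wᵀ * P = 0 := by rw [Matrix.mul_assoc, hWP, Matrix.mul_zero]
  have hsum : ∑ i, P i i = #({i | (i : ℕ) < m} : Finset (Fin d))ᶜ := by
    rw [card_compl_filter_val_lt, ← htr, trace]
    rfl
  have hweights := sum_compl_le_sum_mul (hPs.apply_self_mem_Icc hPi) hsum
    hmu.sq_posPart.le_of_mem_filter_val_lt
  have hdiag : 0 ≤ ∑ i, (W * Wᵀ) i i * (mu i)⁻ := sum_nonneg fun i _ =>
    mul_nonneg (diag_mul_transpose_self_nonneg W i) (negPart_nonneg _)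
  rw [frobNorm_sq_sub_diagonal_eq_of_mul_eq_zero hPs hPi hSP,
    frobNorm_sq_diagonal_truncatedPosPart_sub]
  nlinarith [sq_nonneg (frobNorm ((W * Wᵀ - diagonal mu⁺) * (1 - P)))]

theorem diagonal_posPart_mul_one_sub_eq_truncatedPosPart {mu : Fin d → ℝ}
    {P : Matrix (Fin d) (Fin d) ℝ} (hPs : P.IsSymm) (hPi : IsIdempotentElem P)
    (hP0 : ∀ i : Fin d, (i : ℕ) < m → 0 < mu i → P i i = 0)
    (hP1 : ∀ i : Fin d, m ≤ (i : ℕ) → 0 < mu i → P i i = 1) :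
    diagonal mu⁺ * (1 - P) = diagonal (truncatedPosPart m mu) := by
  ext i j
  rw [diagonal_mul, diagonal_apply]
  rcases le_or_gt (mu i) 0 with hneg | hpos
  · simp [posPart_eq_zero.2 hneg, truncatedPosPart]
  by_cases hi : (i : ℕ) < m
  · rw [Matrix.sub_apply, hPs.apply_eq_zero_of_apply_self_eq_zero hPi (hP0 i hi hpos) j]
    simp [truncatedPosPart, hi, one_apply]
  · rw [Matrix.sub_apply,
      hPs.apply_eq_one_apply_of_apply_self_eq_one hPi (hP1 i (by omega) hpos) j]
    simp [truncatedPosPart, hi]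

theorem mul_transpose_eq_diagonal_truncatedPosPart {mu : Fin d → ℝ} (hmu : StrictAnti mu)
    {W : Matrix (Fin d) (Fin m) ℝ}
    (hW : frobNorm (W * Wᵀ - diagonal mu) ^ 2 ≤
      frobNorm (diagonal (truncatedPosPart m mu) - diagonal mu) ^ 2) :
    W * Wᵀ = diagonal (truncatedPosPart m mu) := by
  obtain ⟨P, hPs, hPi, hWP, htr⟩ := exists_isSymm_isIdempotentElem_transpose_mul_eq_zero W
  have hSP : W * Wᵀ * P = 0 := by rw [Matrix.mul_assoc, hWP, Matrix.mul_zero]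
  have hsum : ∑ i, P i i = #({i | (i : ℕ) < m} : Finset (Fin d))ᶜ := by
    rw [card_compl_filter_val_lt, ← htr, trace]
    rfl
  have hg := hmu.antitone.sq_posPart.le_of_mem_filter_val_lt (m := m)
  have hweights := sum_compl_le_sum_mul (hPs.apply_self_mem_Icc hPi) hsum hg
  have hdiag : 0 ≤ ∑ i, (W * Wᵀ) i i * (mu i)⁻ := sum_nonneg fun i _ =>
    mul_nonneg (diag_mul_transpose_self_nonneg W i) (negPart_nonneg _)
  have hrest := sq_nonneg (frobNorm ((W * Wᵀ - diagonal mu⁺) * (1 - P)))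
  rw [frobNorm_sq_sub_diagonal_eq_of_mul_eq_zero hPs hPi hSP,
    frobNorm_sq_diagonal_truncatedPosPart_sub] at hW
  have hWWt : W * Wᵀ = diagonal mu⁺ * (1 - P) := by
    have h0 := frobNorm_sq_eq_zero_iff.1
      (by linarith : frobNorm ((W * Wᵀ - diagonal mu⁺) * (1 - P)) ^ 2 = 0)
    rw [Matrix.mul_sub, Matrix.mul_one, Matrix.sub_mul, hSP] at h0
    rw [Matrix.mul_sub, Matrix.mul_one, ← sub_eq_zero, ← h0]
    abel
  have hP0 : ∀ i : Fin d, (i : ℕ) < m → 0 < mu i → P i i = 0 := fun i hi hpos =>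
    eq_zero_of_sum_mul_eq_sum_compl (hPs.apply_self_mem_Icc hPi) hsum hg (by linarith)
      (by simpa using hi) fun j hj => by
        simp only [mem_filter, mem_univ, true_and, not_lt] at hj
        have hji : (mu j)⁺ < (mu i)⁺ := by
          rw [posPart_eq_self.2 hpos.le]
          exact posPart_lt.2 ⟨hmu (show i < j by rw [Fin.lt_def]; omega), hpos⟩
        exact pow_lt_pow_left₀ hji (posPart_nonneg _) two_ne_zero
  -- all weights below `m` vanish, so the `d - m` weights from `m` on, each at most `1`, are `1`
  have hP1 : ∀ i : Fin d, m ≤ (i : ℕ) → 0 < mu i → P i i = 1 := fun i hi hpos => by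
    refine eq_one_of_sum_eq_card_compl (fun k => (hPs.apply_self_mem_Icc hPi k).2) hsum
      (fun k hk => ?_) (by simpa using hi)
    simp only [mem_filter, mem_univ, true_and] at hk
    exact hP0 k hk (hpos.trans (hmu (show k < i by rw [Fin.lt_def]; omega)))
  rw [hWWt, diagonal_posPart_mul_one_sub_eq_truncatedPosPart hPs hPi hP0 hP1]

theorem frobNorm_sq_mul_transpose_sub_diagonal_isMin_iff {mu : Fin d → ℝ} (hmu : StrictAnti mu)
    (W : Matrix (Fin d) (Fin m) ℝ) :
    (∀ V : Matrix (Fin d) (Fin m) ℝ,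
      frobNorm (W * Wᵀ - diagonal mu) ^ 2 ≤ frobNorm (V * Vᵀ - diagonal mu) ^ 2) ↔
      W * Wᵀ = diagonal (truncatedPosPart m mu) := by
  obtain ⟨W₀, hW₀⟩ := exists_mul_transpose_eq_diagonal (m := m) fun i => posPart_nonneg (mu i)
  refine ⟨fun h => mul_transpose_eq_diagonal_truncatedPosPart hmu ?_, fun h V => ?_⟩
  · exact hW₀ ▸ h W₀
  · rw [h]
    exact frobNorm_sq_diagonal_truncatedPosPart_sub_le hmu.antitone V

end Diagonal

theorem global_minimizers_regularized_factorized_loss_general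
    (d m : ℕ) (A : Matrix (Fin d) (Fin d) ℝ)
    (l : ℝ)
    (C : Matrix (Fin d) (Fin d) ℝ) (hC : C = A - l • (1 : Matrix (Fin d) (Fin d) ℝ))
    (U : Matrix (Fin d) (Fin d) ℝ) (mu : Fin d → ℝ)
    (hU : Uᵀ * U = 1) (hmu : Antitone mu) (hmu' : Function.Injective mu)
    (hCdec : C = U * Matrix.diagonal mu * Uᵀ)
    (B : Matrix (Fin d) (Fin d) ℝ)
    (hB : B = U * Matrix.diagonal
      (fun i : Fin d => if (i : ℕ) < m then max (mu i) 0 else 0) * Uᵀ)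
    (f : Matrix (Fin d) (Fin m) ℝ → ℝ)
    (hf : f = fun W => frobNorm (W * Wᵀ - A) ^ 2 + 2 * l * (W * Wᵀ).trace) :
    (∃ W : Matrix (Fin d) (Fin m) ℝ, ∀ V, f W ≤ f V) ∧
    (∀ W : Matrix (Fin d) (Fin m) ℝ, (∀ V, f W ≤ f V) ↔ W * Wᵀ = B) ∧
    (∀ W : Matrix (Fin d) (Fin m) ℝ, (∀ V, f W ≤ f V) →
      f W = frobNorm (B - C) ^ 2 + frobNorm A ^ 2 - frobNorm C ^ 2) := by
  have hB' : B = U * diagonal (truncatedPosPart m mu) * Uᵀ := hB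
  have hUW : ∀ W : Matrix (Fin d) (Fin m) ℝ, (Uᵀ * W) * (Uᵀ * W)ᵀ = Uᵀ * (W * Wᵀ) * U := by
    simp [transpose_mul, Matrix.mul_assoc]
  have hfU : ∀ W, f W =
      frobNorm ((Uᵀ * W) * (Uᵀ * W)ᵀ - diagonal mu) ^ 2 + (frobNorm A ^ 2 - frobNorm C ^ 2) := by
    intro W
    simp only [hf]
    rw [hC, frobNorm_sq_mul_transpose_sub_add_mul_trace hU (hC ▸ hCdec)]
  have hmin : ∀ W, (∀ V, f W ≤ f V) ↔ W * Wᵀ = B := by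
    intro W
    rw [hB', ← transpose_mul_mul_eq_iff hU, ← hUW,
      ← frobNorm_sq_mul_transpose_sub_diagonal_isMin_iff (hmu.strictAnti_of_injective hmu')]
    simp only [hfU, add_le_add_iff_right]
    refine ⟨fun h V => ?_, fun h V => h _⟩
    simpa [← Matrix.mul_assoc, hU] using h (U * V)
  obtain ⟨W₀, hW₀⟩ := exists_mul_transpose_eq_diagonal (m := m) fun i => posPart_nonneg (mu i)
  have hUW₀ : (U * W₀) * (U * W₀)ᵀ = B := by
    rw [hB', ← transpose_mul_mul_eq_iff hU, ← hUW, ← Matrix.mul_assoc, hU, Matrix.one_mul, hW₀]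
    rfl
  refine ⟨⟨U * W₀, (hmin _).2 hUW₀⟩, hmin, fun W hW => ?_⟩
  have hBC : B - C = U * (diagonal (truncatedPosPart m mu) - diagonal mu) * Uᵀ := by
    rw [hB', hCdec, Matrix.mul_sub, Matrix.sub_mul]
  rw [hfU, hUW, (transpose_mul_mul_eq_iff hU).2 (((hmin W).1 hW).trans hB'), hBC,
    frobNorm_mul_mul_transpose hU]
  ring

/-- **Global minimizers of the regularized factorized denoising loss.** Let `A` be real
symmetric `d × d`, `l > 0`, `m ≤ d`, and suppose the eigenvalues `mu` of `C = A - l•I`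
(given by a spectral decomposition `C = U * diagonal mu * Uᵀ` with `U` orthogonal and `mu`
nonincreasing) are pairwise distinct and nonzero. Set `B = C⁺₍ₘ₎`. Consider
`f W = ‖WWᵀ - A‖_F² + 2 l tr(WWᵀ)` on `ℝ^{d×m}`. Then `f` attains its global minimum,
`W` is a global minimizer iff `WWᵀ = B`, and the minimum value is
`‖B - C‖_F² + ‖A‖_F² - ‖C‖_F²`. -/
theorem global_minimizers_regularized_factorized_loss
    (d m : ℕ) (hm : m ≤ d) (A : Matrix (Fin d) (Fin d) ℝ) (hA : A.IsSymm)
    (l : ℝ) (hl : 0 < l)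
    (C : Matrix (Fin d) (Fin d) ℝ) (hC : C = A - l • (1 : Matrix (Fin d) (Fin d) ℝ))
    (U : Matrix (Fin d) (Fin d) ℝ) (mu : Fin d → ℝ)
    (hU : Uᵀ * U = 1) (hmu : Antitone mu) (hmu' : Function.Injective mu)
    (hmu0 : ∀ i, mu i ≠ 0)
    (hCdec : C = U * Matrix.diagonal mu * Uᵀ)
    (B : Matrix (Fin d) (Fin d) ℝ)
    (hB : B = U * Matrix.diagonal
      (fun i : Fin d => if (i : ℕ) < m then max (mu i) 0 else 0) * Uᵀ)
    (f : Matrix (Fin d) (Fin m) ℝ → ℝ)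
    (hf : f = fun W => frobNorm (W * Wᵀ - A) ^ 2 + 2 * l * (W * Wᵀ).trace) :
    (∃ W : Matrix (Fin d) (Fin m) ℝ, ∀ V, f W ≤ f V) ∧
    (∀ W : Matrix (Fin d) (Fin m) ℝ, (∀ V, f W ≤ f V) ↔ W * Wᵀ = B) ∧
    (∀ W : Matrix (Fin d) (Fin m) ℝ, (∀ V, f W ≤ f V) →
      f W = frobNorm (B - C) ^ 2 + frobNorm A ^ 2 - frobNorm C ^ 2) :=
  global_minimizers_regularized_factorized_loss_general d m A l C hC U mu hU hmu hmu' hCdec B hB f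
    hf
end

section
/- Let C be a real symmetric d×d matrix and Z₀ a real symmetric positive definite d×d matrix. For every t ≥ 0, the matrix M(t) = Z₀⁻¹ + 4∫₀ᵗ e^{4Cs} ds is symmetric positive definite, hence invertible, and the function Z(t) = e^{2Ct} M(t)⁻¹ e^{2Ct} is differentiable in t and solves the matrix Riccati equation Z′(t) = 2(C Z(t) + Z(t) C) − 4 Z(t)², with initial condition Z(0) = Z₀. -/
open Matrix MeasureTheory intervalIntegral

/-- `Mfun C Z0 t = Z0⁻¹ + 4 ∫₀ᵗ e^{4Cs} ds` (the integral is taken entrywise). -/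
noncomputable def Mfun {d : ℕ} (C Z0 : Matrix (Fin d) (Fin d) ℝ) (t : ℝ) :
    Matrix (Fin d) (Fin d) ℝ :=
  Z0⁻¹ + Matrix.of fun i j =>
    4 * ∫ s in (0:ℝ)..t, (NormedSpace.exp ((4 * s) • C)) i j

/-- `Zfun C Z0 t = e^{2Ct} (Mfun C Z0 t)⁻¹ e^{2Ct}`. -/
noncomputable def Zfun {d : ℕ} (C Z0 : Matrix (Fin d) (Fin d) ℝ) (t : ℝ) :
    Matrix (Fin d) (Fin d) ℝ :=
  NormedSpace.exp ((2 * t) • C) * (Mfun C Z0 t)⁻¹ * NormedSpace.exp ((2 * t) • C)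

/-!
`M(t)` is `Z₀⁻¹` plus the integral of the positive semidefinite matrices
`4 e^{4Cs} = (2 e^{2Cs})ᵀ (2 e^{2Cs})`, hence positive definite and invertible.
With `E(t) = e^{2Ct}`, which commutes with `C`, we have `M' = 4 E²` and `(M⁻¹)' = -M⁻¹ M' M⁻¹`,
so the product rule for `Z = E M⁻¹ E` gives
`Z' = 2C Z + 2Z C - 4 (E M⁻¹ E)(E M⁻¹ E) = 2(CZ + ZC) - 4Z²`.
-/

open NormedSpace

theorem HasDerivAt.ringInverse {𝕜 R : Type*} [NontriviallyNormedField 𝕜] [NormedRing R]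
    [HasSummableGeomSeries R] [NormedAlgebra 𝕜 R] {f : 𝕜 → R} {f' : R} {t : 𝕜}
    (hf : HasDerivAt f f' t) (hu : IsUnit (f t)) :
    HasDerivAt (fun s => Ring.inverse (f s))
      (-(Ring.inverse (f t) * f' * Ring.inverse (f t))) t := by
  obtain ⟨u, hu⟩ := hu
  have hinv := hasFDerivAt_ringInverse (𝕜 := 𝕜) u
  rw [hu] at hinv
  rw [← hu, Ring.inverse_unit]
  exact hinv.comp_hasDerivAt t hf

theorem hasDerivAt_exp_mul_inverse_mul_exp {𝕂 R : Type*} [RCLike 𝕂] [NormedRing R]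
    [NormedAlgebra 𝕂 R] [CompleteSpace R] (A : R) (c : 𝕂) {M Z : 𝕂 → R} {t : 𝕂}
    (hZ : Z = fun s => exp (s • A) * Ring.inverse (M s) * exp (s • A))
    (hM : HasDerivAt M (c • (exp (t • A) * exp (t • A))) t) (hu : IsUnit (M t)) :
    HasDerivAt Z (A * Z t + Z t * A - c • (Z t * Z t)) t := by
  subst hZ
  refine ((hasDerivAt_exp_smul_const' A t).mul (hM.ringInverse hu) |>.mul
    (hasDerivAt_exp_smul_const A t)).congr_deriv ?_
  simp only [Pi.mul_apply, smul_mul_assoc, mul_smul_comm, mul_neg, mul_assoc]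
  noncomm_ring

theorem Matrix.posSemidef_of_intervalIntegral {n : Type*} [Fintype n] {f : ℝ → Matrix n n ℝ}
    {a b : ℝ} (hab : a ≤ b) (hf : ∀ i j, IntervalIntegrable (fun s => f s i j) volume a b)
    (hpsd : ∀ s ∈ Set.Icc a b, (f s).PosSemidef) :
    (Matrix.of fun i j => ∫ s in a..b, f s i j).PosSemidef := by
  refine ⟨?_, fun x => ?_⟩
  · ext i j
    simp only [conjTranspose_apply, of_apply, star_trivial]
    refine integral_congr fun s hs => ?_
    simpa using (hpsd s (Set.uIcc_of_le hab ▸ hs)).isHermitian.apply i j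
  · have hint : ∀ i j, IntervalIntegrable (fun s => star (x i) * f s i j * x j) volume a b :=
      fun i j => ((hf i j).const_mul _).mul_const _
    have hrow : ∀ i, IntervalIntegrable
        (fun s => ∑ j ∈ x.support, star (x i) * f s i j * x j) volume a b := fun i => by
      simpa only [Finset.sum_fn] using IntervalIntegrable.sum _ fun j _ => hint i j
    have hquad : (∫ s in a..b, x.sum fun i xi => x.sum fun j xj => star xi * f s i j * xj) =
        x.sum fun i xi => x.sum fun j xj =>
          star xi * (of fun i j => ∫ s in a..b, f s i j) i j * xj := by
      simp only [Finsupp.sum, of_apply, integral_finsetSum fun i _ => hrow i,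
        integral_finsetSum fun j _ => hint _ j, intervalIntegral.integral_mul_const,
        intervalIntegral.integral_const_mul]
    rw [← hquad]
    exact integral_nonneg hab fun s hs => (hpsd s hs).2 x

open scoped ComplexOrder in
theorem Matrix.IsHermitian.posSemidef_exp {𝕜 n : Type*} [RCLike 𝕜] [Fintype n] [DecidableEq n]
    {A : Matrix n n 𝕜} (hA : A.IsHermitian) : (NormedSpace.exp A).PosSemidef := by
  have hhalf : ((2⁻¹ : ℝ) • A).IsHermitian := hA.smul (IsSelfAdjoint.all _)
  have hsplit : NormedSpace.exp A =
      (NormedSpace.exp ((2⁻¹ : ℝ) • A))ᴴ * NormedSpace.exp ((2⁻¹ : ℝ) • A) := by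
    rw [hhalf.exp.eq, ← Matrix.exp_add_of_commute _ _ (Commute.refl _), ← add_smul]
    norm_num
  rw [hsplit]
  exact posSemidef_conjTranspose_mul_self _

section Riccati

-- Any matrix norm would do: the statements below only see its topology, the product one.
attribute [local instance] Matrix.linftyOpNormedRing Matrix.linftyOpNormedAlgebra

variable {d : ℕ} (C Z0 : Matrix (Fin d) (Fin d) ℝ)

theorem continuous_four_smul_exp_apply (i j : Fin d) :
    Continuous fun s : ℝ => ((4 : ℝ) • exp ((4 * s) • C)) i j := by
  fun_prop

theorem Mfun_eq_inv_add_integral : Mfun C Z0 = fun t =>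
    Z0⁻¹ + of fun i j => ∫ s in (0:ℝ)..t, ((4 : ℝ) • exp ((4 * s) • C)) i j := by
  ext t
  simp [Mfun, intervalIntegral.integral_const_mul]

theorem Mfun_zero : Mfun C Z0 0 = Z0⁻¹ := by
  ext i j
  simp [Mfun]

theorem hasDerivAt_Mfun (t : ℝ) : HasDerivAt (Mfun C Z0) ((4 : ℝ) • exp ((4 * t) • C)) t := by
  rw [Mfun_eq_inv_add_integral]
  refine hasDerivAt_pi.2 fun i => hasDerivAt_pi.2 fun j => ?_
  have hcont := continuous_four_smul_exp_apply C i j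
  exact (integral_hasDerivAt_right (hcont.intervalIntegrable _ _)
    (hcont.stronglyMeasurableAtFilter _ _) hcont.continuousAt).const_add _

variable {C Z0}

theorem Mfun_posDef (hC : C.IsSymm) (hZ0 : Z0.PosDef) {t : ℝ} (ht : 0 ≤ t) :
    (Mfun C Z0 t).PosDef := by
  rw [Mfun_eq_inv_add_integral]
  refine hZ0.inv.add_posSemidef (posSemidef_of_intervalIntegral ht
    (fun i j => (continuous_four_smul_exp_apply C i j).intervalIntegrable _ _)
    fun s _ => .smul ?_ (by norm_num))
  exact ((isHermitian_iff_isSymm.2 hC).smul (IsSelfAdjoint.all _)).posSemidef_exp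

theorem Zfun_zero (hZ0 : IsUnit Z0) : Zfun C Z0 0 = Z0 := by
  simp [Zfun, Mfun_zero, nonsing_inv_nonsing_inv _ ((isUnit_iff_isUnit_det _).1 hZ0)]

theorem hasDerivAt_Zfun {t : ℝ} (hU : IsUnit (Mfun C Z0 t)) :
    HasDerivAt (Zfun C Z0)
      ((2:ℝ) • (C * Zfun C Z0 t + Zfun C Z0 t * C) - (4:ℝ) • (Zfun C Z0 t * Zfun C Z0 t)) t := by
  have hZ : Zfun C Z0 = fun s =>
      exp (s • (2:ℝ) • C) * Ring.inverse (Mfun C Z0 s) * exp (s • (2:ℝ) • C) := by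
    ext1 s
    rw [Zfun, smul_smul, mul_comm s, nonsing_inv_eq_ringInverse]
  have hexp : exp ((4 * t) • C) = exp (t • (2:ℝ) • C) * exp (t • (2:ℝ) • C) := by
    rw [← Matrix.exp_add_of_commute _ _ (Commute.refl _), ← add_smul, smul_smul]
    ring_nf
  have hderiv := hasDerivAt_exp_mul_inverse_mul_exp ((2:ℝ) • C) (4:ℝ) hZ
    (hexp ▸ hasDerivAt_Mfun C Z0 t) hU
  rwa [smul_mul_assoc, mul_smul_comm, ← smul_add] at hderiv

end Riccati

theorem riccati_closed_form_solution_general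
    (d : ℕ) (C Z0 : Matrix (Fin d) (Fin d) ℝ) (hC : C.IsSymm)
    (hZ0pd : Z0.PosDef) :
    (∀ t : ℝ, 0 ≤ t → (Mfun C Z0 t).IsSymm ∧ (Mfun C Z0 t).PosDef ∧
      IsUnit (Mfun C Z0 t)) ∧
    Zfun C Z0 0 = Z0 ∧
    (∀ t : ℝ, 0 ≤ t → ∀ i j, HasDerivAt (fun s => Zfun C Z0 s i j)
      (((2:ℝ) • (C * Zfun C Z0 t + Zfun C Z0 t * C)
        - (4:ℝ) • (Zfun C Z0 t * Zfun C Z0 t)) i j) t) := by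
  have hM : ∀ t, 0 ≤ t → (Mfun C Z0 t).PosDef := fun t ht => Mfun_posDef hC hZ0pd ht
  refine ⟨fun t ht => ⟨isHermitian_iff_isSymm.1 (hM t ht).isHermitian, hM t ht, (hM t ht).isUnit⟩,
    Zfun_zero hZ0pd.isUnit, fun t ht i j => ?_⟩
  exact hasDerivAt_pi.1 (hasDerivAt_pi.1 (hasDerivAt_Zfun (hM t ht).isUnit) i) j

/-- **Closed-form solution of the matrix Riccati equation.** Let `C` be real symmetric and
`Z0` real symmetric positive definite. For every `t ≥ 0` the matrix
`M(t) = Z0⁻¹ + 4 ∫₀ᵗ e^{4Cs} ds` is symmetric positive definite, hence invertible, and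
`Z(t) = e^{2Ct} M(t)⁻¹ e^{2Ct}` is differentiable in `t` (entrywise) and solves the
Riccati equation `Z' = 2(CZ + ZC) - 4Z²` with `Z(0) = Z0`. -/
theorem riccati_closed_form_solution
    (d : ℕ) (C Z0 : Matrix (Fin d) (Fin d) ℝ) (hC : C.IsSymm)
    (hZ0 : Z0.IsSymm) (hZ0pd : Z0.PosDef) :
    (∀ t : ℝ, 0 ≤ t → (Mfun C Z0 t).IsSymm ∧ (Mfun C Z0 t).PosDef ∧
      IsUnit (Mfun C Z0 t)) ∧
    Zfun C Z0 0 = Z0 ∧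
    (∀ t : ℝ, 0 ≤ t → ∀ i j, HasDerivAt (fun s => Zfun C Z0 s i j)
      (((2:ℝ) • (C * Zfun C Z0 t + Zfun C Z0 t * C)
        - (4:ℝ) • (Zfun C Z0 t * Zfun C Z0 t)) i j) t) :=
  riccati_closed_form_solution_general d C Z0 hC hZ0pd
end

section
/- Let C be a real symmetric invertible d×d matrix and Z₀ a real symmetric positive definite d×d matrix, and let Z(t) = e^{2Ct} (Z₀⁻¹ + 4∫₀ᵗ e^{4Cs} ds)⁻¹ e^{2Ct} be the solution of the Riccati equation Z′ = 2(CZ + ZC) − 4Z² with Z(0) = Z₀. Then Z(t) converges as t → ∞ to the positive part C⁺ of C (the matrix obtained by zeroing out all negative eigenvalues of C). -/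
/-!
In an orthonormal eigenbasis of `C` the flow reads `E (A + D)⁻¹ E` with `A = Uᵀ Z₀⁻¹ U`,
`E = diag(e^{2λt})` and `D = diag((e^{4λt} - 1)/λ)`. Split `e^{2λt} = e^{2λ⁺t} e^{2λ⁻t}` with
`λ⁻ = min λ 0` and move the growing factors `e^{2λ⁺t}` inside the inverse: the flow becomes
`diag(e^{2λ⁻t}) K(t)⁻¹ diag(e^{2λ⁻t})`, where `K(t) = diag(e^{-2λ⁺t}) (A + D) diag(e^{-2λ⁺t})`
converges to the positive definite matrix `K = P₋ A P₋ + diag |λ|⁻¹`, `P₋` the projection onto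
the negative eigenvalues. As `diag(e^{2λ⁻t}) → P₊` and `K diag(λ⁺) = P₊`, the limit is
`P₊ K⁻¹ P₊ = diag(λ⁺)`.
-/

open Matrix Filter Topology

open Real

lemma tendsto_exp_mul_atTop_nhds_zero_of_neg {c : ℝ} (hc : c < 0) :
    Tendsto (fun t => exp (c * t)) atTop (𝓝 0) :=
  tendsto_exp_atBot.comp (tendsto_id.const_mul_atTop_of_neg hc)

lemma tendsto_exp_neg_max_zero_mul (x : ℝ) :
    Tendsto (fun t => exp (-(2 * max x 0 * t))) atTop (𝓝 (if 0 < x then 0 else 1)) := by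
  split_ifs with hx
  · simpa [max_eq_left hx.le, ← neg_mul] using
      tendsto_exp_mul_atTop_nhds_zero_of_neg (c := -(2 * x)) (by linarith)
  · simp [max_eq_right (not_lt.mp hx)]

lemma tendsto_exp_min_zero_mul (x : ℝ) :
    Tendsto (fun t => exp (2 * min x 0 * t)) atTop (𝓝 (if x < 0 then 0 else 1)) := by
  split_ifs with hx
  · simpa [min_eq_left hx.le] using
      tendsto_exp_mul_atTop_nhds_zero_of_neg (c := 2 * x) (by linarith)
  · simp [min_eq_right (not_lt.mp hx)]

lemma tendsto_exp_min_zero_sub_exp_neg_max_zero_div {x : ℝ} (hx : x ≠ 0) :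
    Tendsto (fun t => (exp (4 * min x 0 * t) - exp (-(4 * max x 0 * t))) / x) atTop
      (𝓝 |x|⁻¹) := by
  rcases hx.lt_or_gt with hneg | hpos
  · have h := ((tendsto_exp_mul_atTop_nhds_zero_of_neg (c := 4 * x) (by linarith)).sub_const
      1).div_const x
    simpa [min_eq_left hneg.le, max_eq_right hneg.le, abs_of_neg hneg, neg_div, ← div_neg] using h
  · have h := ((tendsto_exp_mul_atTop_nhds_zero_of_neg (c := -(4 * x)) (by linarith)).const_sub
      1).div_const x
    simpa [min_eq_right hpos.le, max_eq_left hpos.le, abs_of_pos hpos, ← neg_mul] using h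

lemma Filter.Tendsto.matrix_diagonal {α n R : Type*} [DecidableEq n] [TopologicalSpace R]
    [Zero R] {l : Filter α} {f : α → n → R} {v : n → R}
    (h : ∀ k, Tendsto (fun a => f a k) l (𝓝 (v k))) :
    Tendsto (fun a => diagonal (f a)) l (𝓝 (diagonal v)) :=
  (continuous_id.matrix_diagonal.tendsto v).comp (tendsto_pi_nhds.mpr h)

section DiagonalFlow

variable {n : Type*} [Fintype n] [DecidableEq n]

noncomputable def diagRiccatiFlow (A : Matrix n n ℝ) (lam : n → ℝ) (t : ℝ) : Matrix n n ℝ :=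
  diagonal (fun k => exp (2 * lam k * t)) *
    (A + diagonal fun k => (exp (4 * lam k * t) - 1) / lam k)⁻¹ *
    diagonal (fun k => exp (2 * lam k * t))

lemma diagRiccatiFlow_eq_rescaled (A : Matrix n n ℝ) (lam : n → ℝ) (t : ℝ) :
    diagRiccatiFlow A lam t =
      diagonal (fun k => exp (2 * min (lam k) 0 * t)) *
        (diagonal (fun k => exp (-(2 * max (lam k) 0 * t))) * A *
            diagonal (fun k => exp (-(2 * max (lam k) 0 * t))) +
          diagonal fun k =>
            (exp (4 * min (lam k) 0 * t) - exp (-(4 * max (lam k) 0 * t))) / lam k)⁻¹ *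
        diagonal (fun k => exp (2 * min (lam k) 0 * t)) := by
  set g := diagonal fun k => exp (2 * max (lam k) 0 * t)
  set gInv := diagonal fun k => exp (-(2 * max (lam k) 0 * t))
  set h := diagonal fun k => exp (2 * min (lam k) 0 * t)
  have hg : g * gInv = 1 := by simp [g, gInv, ← exp_add]
  have hgh : h * g = g * h := by simp only [g, h, diagonal_mul_diagonal, mul_comm]
  have hexp : diagonal (fun k => exp (2 * lam k * t)) = h * g := by
    simp only [h, g, diagonal_mul_diagonal, ← exp_add, ← add_mul, ← mul_add, min_add_max, add_zero]
  have hrescale : gInv * (A + diagonal fun k => (exp (4 * lam k * t) - 1) / lam k) * gInv =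
      gInv * A * gInv + diagonal fun k =>
        (exp (4 * min (lam k) 0 * t) - exp (-(4 * max (lam k) 0 * t))) / lam k := by
    simp only [mul_add, add_mul, gInv, diagonal_mul_diagonal]
    congr; funext k
    have hmin : 4 * min (lam k) 0 * t =
        4 * lam k * t + -(2 * max (lam k) 0 * t) + -(2 * max (lam k) 0 * t) := by
      linear_combination (4 * t) * min_add_max (lam k) 0
    rw [hmin, show -(4 * max (lam k) 0 * t) = -(2 * max (lam k) 0 * t) + -(2 * max (lam k) 0 * t)
      by ring, exp_add, exp_add, exp_add]
    ring
  rw [← hrescale, Matrix.mul_inv_rev, Matrix.mul_inv_rev, inv_eq_left_inv hg, diagRiccatiFlow,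
    hexp]
  simp only [mul_assoc]
  rw [hgh]

lemma posDef_diagonal_mul_mul_diagonal_add {A : Matrix n n ℝ} (hA : A.PosSemidef) (q : n → ℝ)
    {r : n → ℝ} (hr : ∀ k, 0 < r k) : (diagonal q * A * diagonal q + diagonal r).PosDef := by
  have hq := hA.mul_mul_conjTranspose_same (diagonal q)
  rw [diagonal_conjTranspose, star_trivial] at hq
  exact PosDef.posSemidef_add hq (posDef_diagonal_iff.mpr hr)

/-- The limit as `t → ∞` of the matrix inverted in `diagRiccatiFlow_eq_rescaled`. -/
noncomputable def rescaledRiccatiLimit (A : Matrix n n ℝ) (lam : n → ℝ) : Matrix n n ℝ :=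
  diagonal (fun k => if 0 < lam k then 0 else 1) * A *
    diagonal (fun k => if 0 < lam k then 0 else 1) + diagonal fun k => |lam k|⁻¹

lemma rescaledRiccatiLimit_posDef {A : Matrix n n ℝ} (hA : A.PosSemidef) {lam : n → ℝ}
    (hlam : ∀ k, lam k ≠ 0) : (rescaledRiccatiLimit A lam).PosDef :=
  posDef_diagonal_mul_mul_diagonal_add hA _ fun k => inv_pos.mpr (abs_pos.mpr (hlam k))

lemma rescaledRiccatiLimit_mul_diagonal_posPart (A : Matrix n n ℝ) {lam : n → ℝ}
    (hlam : ∀ k, lam k ≠ 0) :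
    rescaledRiccatiLimit A lam * diagonal (fun k => max (lam k) 0) =
      diagonal fun k => if lam k < 0 then 0 else 1 := by
  have hq : (fun k => (if 0 < lam k then 0 else 1) * max (lam k) 0) = fun _ => 0 := by
    funext k
    split_ifs with h
    · rw [zero_mul]
    · simp [max_eq_right (not_lt.mp h)]
  simp only [rescaledRiccatiLimit, add_mul, mul_assoc, diagonal_mul_diagonal, hq, diagonal_zero,
    mul_zero, zero_add]
  congr 1; funext k
  rcases (hlam k).lt_or_gt with h | h
  · simp [h, max_eq_right h.le]
  · simp [h.not_gt, max_eq_left h.le, abs_of_pos h, hlam k]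

lemma diagonal_mul_inv_rescaledRiccatiLimit_mul_diagonal {A : Matrix n n ℝ} (hA : A.PosSemidef)
    {lam : n → ℝ} (hlam : ∀ k, lam k ≠ 0) :
    diagonal (fun k => if lam k < 0 then 0 else 1) * (rescaledRiccatiLimit A lam)⁻¹ *
        diagonal (fun k => if lam k < 0 then 0 else 1) =
      diagonal fun k => max (lam k) 0 := by
  have hK := (isUnit_iff_isUnit_det _).mp (rescaledRiccatiLimit_posDef hA hlam).isUnit
  have hKinv : (rescaledRiccatiLimit A lam)⁻¹ * diagonal (fun k => if lam k < 0 then 0 else 1) =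
      diagonal fun k => max (lam k) 0 := by
    rw [← rescaledRiccatiLimit_mul_diagonal_posPart A hlam, ← mul_assoc, nonsing_inv_mul _ hK,
      one_mul]
  rw [mul_assoc, hKinv, diagonal_mul_diagonal]
  congr; funext k
  split_ifs with h
  · simp [max_eq_right h.le]
  · rw [one_mul]

theorem tendsto_diagRiccatiFlow {A : Matrix n n ℝ} (hA : A.PosSemidef) {lam : n → ℝ}
    (hlam : ∀ k, lam k ≠ 0) :
    Tendsto (diagRiccatiFlow A lam) atTop (𝓝 (diagonal fun k => max (lam k) 0)) := by
  have hKdet := (isUnit_iff_isUnit_det _).mp (rescaledRiccatiLimit_posDef hA hlam).isUnit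
  have hgInv := Tendsto.matrix_diagonal fun k => tendsto_exp_neg_max_zero_mul (lam k)
  have hh := Tendsto.matrix_diagonal fun k => tendsto_exp_min_zero_mul (lam k)
  have hrescaled := ((hgInv.mul (tendsto_const_nhds (x := A))).mul hgInv).add
    (Tendsto.matrix_diagonal fun k => tendsto_exp_min_zero_sub_exp_neg_max_zero_div (hlam k))
  have hinv := (continuousAt_matrix_inv (rescaledRiccatiLimit A lam) (by
    rw [Ring.inverse_eq_inv']; exact continuousAt_inv₀ hKdet.ne_zero)).tendsto.comp hrescaled
  rw [← diagonal_mul_inv_rescaledRiccatiLimit_mul_diagonal hA hlam]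
  exact ((hh.mul hinv).mul hh).congr fun t => (diagRiccatiFlow_eq_rescaled A lam t).symm

end DiagonalFlow

section Orthogonal

variable {n : Type*} [Fintype n] [DecidableEq n]

lemma exp_smul_orthogonal_conj_diagonal {U : Matrix n n ℝ} (hU : Uᵀ * U = 1) (lam : n → ℝ)
    (a : ℝ) :
    NormedSpace.exp (a • (U * diagonal lam * Uᵀ)) =
      U * diagonal (fun k => exp (a * lam k)) * Uᵀ := by
  have hUinv : U⁻¹ = Uᵀ := inv_eq_left_inv hU
  have hUunit : IsUnit U := (isUnit_iff_isUnit_det U).mpr (isUnit_det_of_left_inverse hU)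
  rw [← hUinv, ← smul_mul, ← Matrix.mul_smul, ← diagonal_smul, exp_conj U _ hUunit, exp_diagonal]
  congr
  funext k
  simp [Real.exp_eq_exp_ℝ]

lemma inv_orthogonal_conj {U : Matrix n n ℝ} (hU : Uᵀ * U = 1) (X : Matrix n n ℝ) :
    (U * X * Uᵀ)⁻¹ = U * X⁻¹ * Uᵀ := by
  rw [Matrix.mul_inv_rev, Matrix.mul_inv_rev, inv_eq_left_inv hU, inv_eq_right_inv hU, mul_assoc]

lemma ne_zero_of_isUnit_det_orthogonal_conj_diagonal {U : Matrix n n ℝ} (hU : Uᵀ * U = 1)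
    {lam : n → ℝ} (h : IsUnit (U * diagonal lam * Uᵀ).det) (k : n) : lam k ≠ 0 := by
  rw [det_mul_comm, ← mul_assoc, hU, one_mul, det_diagonal] at h
  exact Finset.prod_ne_zero_iff.mp h.ne_zero k (Finset.mem_univ k)

end Orthogonal

lemma intervalIntegral_mul_diagonal_mul_apply {m n p : Type*} [Fintype n] [DecidableEq n]
    (U : Matrix m n ℝ) (V : Matrix n p ℝ) {f : n → ℝ → ℝ} {a b : ℝ}
    (hf : ∀ k, IntervalIntegrable (f k) MeasureTheory.volume a b) (i : m) (j : p) :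
    ∫ s in a..b, (U * diagonal (fun k => f k s) * V) i j =
      (U * diagonal (fun k => ∫ s in a..b, f k s) * V) i j := by
  simp only [mul_apply, diagonal_apply, mul_ite, mul_zero, Finset.sum_ite_eq', Finset.mem_univ,
    if_true]
  rw [intervalIntegral.integral_finsetSum fun k _ => ((hf k).const_mul _).mul_const _]
  simp only [intervalIntegral.integral_mul_const, intervalIntegral.integral_const_mul]

lemma four_mul_integral_exp_four_mul {c : ℝ} (hc : c ≠ 0) (t : ℝ) :
    4 * ∫ s in (0 : ℝ)..t, exp (4 * s * c) = (exp (4 * c * t) - 1) / c := by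
  have h4c : 4 * c ≠ 0 := mul_ne_zero four_ne_zero hc
  simp_rw [show ∀ s, 4 * s * c = 4 * c * s from fun s => by ring]
  rw [intervalIntegral.integral_comp_mul_left exp h4c, integral_exp, mul_zero, exp_zero,
    smul_eq_mul]
  field_simp

lemma Mfun_orthogonal_conj_diagonal {d : ℕ} (Z0 U : Matrix (Fin d) (Fin d) ℝ)
    (hU : Uᵀ * U = 1) {lam : Fin d → ℝ} (hlam : ∀ k, lam k ≠ 0) (t : ℝ) :
    Mfun (U * diagonal lam * Uᵀ) Z0 t =
      U * (Uᵀ * Z0⁻¹ * U + diagonal fun k => (exp (4 * lam k * t) - 1) / lam k) * Uᵀ := by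
  have hZ0 : U * (Uᵀ * Z0⁻¹ * U) * Uᵀ = Z0⁻¹ := by
    simp only [← Matrix.mul_assoc, mul_eq_one_comm.mp hU, Matrix.one_mul]
    simp only [Matrix.mul_assoc, mul_eq_one_comm.mp hU, Matrix.mul_one]
  rw [mul_add, add_mul, hZ0, Mfun]
  congr 1
  ext i j
  simp_rw [of_apply, exp_smul_orthogonal_conj_diagonal hU]
  rw [intervalIntegral_mul_diagonal_mul_apply U Uᵀ (f := fun k s => exp (4 * s * lam k))
    fun k => (by fun_prop : Continuous _).intervalIntegrable _ _]
  rw [← smul_eq_mul, ← Matrix.smul_apply, ← Matrix.smul_mul, ← Matrix.mul_smul, ← diagonal_smul]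
  simp only [Pi.smul_def, smul_eq_mul, four_mul_integral_exp_four_mul (hlam _)]

lemma Zfun_orthogonal_conj_diagonal {d : ℕ} (Z0 U : Matrix (Fin d) (Fin d) ℝ)
    (hU : Uᵀ * U = 1) {lam : Fin d → ℝ} (hlam : ∀ k, lam k ≠ 0) (t : ℝ) :
    Zfun (U * diagonal lam * Uᵀ) Z0 t = U * diagRiccatiFlow (Uᵀ * Z0⁻¹ * U) lam t * Uᵀ := by
  have hcancel : ∀ M : Matrix (Fin d) (Fin d) ℝ, Uᵀ * (U * M) = M := fun M => by
    rw [← Matrix.mul_assoc, hU, Matrix.one_mul]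
  rw [Zfun, Mfun_orthogonal_conj_diagonal Z0 U hU hlam, inv_orthogonal_conj hU,
    exp_smul_orthogonal_conj_diagonal hU, diagRiccatiFlow]
  simp only [mul_right_comm 2 t, Matrix.mul_assoc, hcancel]

theorem riccati_flow_tendsto_posPart_general
    (d : ℕ) (C Z0 : Matrix (Fin d) (Fin d) ℝ)
    (hCinv : IsUnit C.det)
    (hZ0pd : Z0.PosDef)
    (U : Matrix (Fin d) (Fin d) ℝ) (lam : Fin d → ℝ)
    (hU : Uᵀ * U = 1)
    (hCdec : C = U * Matrix.diagonal lam * Uᵀ)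
    (Cp : Matrix (Fin d) (Fin d) ℝ)
    (hCp : Cp = U * Matrix.diagonal (fun i => max (lam i) 0) * Uᵀ) :
    ∀ i j, Tendsto (fun t => Zfun C Z0 t i j) atTop (𝓝 (Cp i j)) := by
  subst hCdec hCp
  have hlam := ne_zero_of_isUnit_det_orthogonal_conj_diagonal hU hCinv
  have hA : (Uᵀ * Z0⁻¹ * U).PosSemidef := by
    simpa only [conjTranspose_eq_transpose_of_trivial] using
      hZ0pd.posSemidef.inv.conjTranspose_mul_mul_same U
  have hlim := ((tendsto_diagRiccatiFlow hA hlam).const_mul U).mul_const Uᵀ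
  intro i j
  simp_rw [Zfun_orthogonal_conj_diagonal Z0 U hU hlam]
  exact tendsto_pi_nhds.mp (tendsto_pi_nhds.mp hlim i) j

/-- **Convergence of the Riccati/Oja flow to the positive part.** Let `C` be real
symmetric and invertible, with spectral decomposition `C = U * diagonal lam * Uᵀ`
(`U` orthogonal, `lam` nonincreasing), and positive part `Cp = U * diagonal (lam⁺) * Uᵀ`.
Let `Z0` be real symmetric positive definite. Then the solution
`Z(t) = e^{2Ct} (Z0⁻¹ + 4∫₀ᵗ e^{4Cs} ds)⁻¹ e^{2Ct}` of the Riccati equation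
`Z' = 2(CZ + ZC) - 4Z²`, `Z(0) = Z0`, converges (entrywise) to `Cp` as `t → ∞`. -/
theorem riccati_flow_tendsto_posPart
    (d : ℕ) (C Z0 : Matrix (Fin d) (Fin d) ℝ) (hC : C.IsSymm)
    (hCinv : IsUnit C.det)
    (hZ0 : Z0.IsSymm) (hZ0pd : Z0.PosDef)
    (U : Matrix (Fin d) (Fin d) ℝ) (lam : Fin d → ℝ)
    (hU : Uᵀ * U = 1) (hlam : Antitone lam)
    (hCdec : C = U * Matrix.diagonal lam * Uᵀ)
    (Cp : Matrix (Fin d) (Fin d) ℝ)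
    (hCp : Cp = U * Matrix.diagonal (fun i => max (lam i) 0) * Uᵀ) :
    ∀ i j, Tendsto (fun t => Zfun C Z0 t i j) atTop (𝓝 (Cp i j)) :=
  riccati_flow_tendsto_posPart_general d C Z0 hCinv hZ0pd U lam hU hCdec Cp hCp
end

section
/- Let C be a real symmetric invertible d×d matrix and Z₀ a real symmetric positive definite d×d matrix, and let Z(t) = e^{2Ct} (Z₀⁻¹ + 4∫₀ᵗ e^{4Cs} ds)⁻¹ e^{2Ct} be the solution of the Riccati equation Z′ = 2(CZ + ZC) − 4Z² with Z(0) = Z₀. Then Z(t) converges exponentially fast to the positive part C⁺ of C: there exist constants K > 0 and ρ > 0 such that ‖Z(t) − C⁺‖_F ≤ K e^{−ρ t} for all t ≥ 0. -/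
open Matrix Filter Topology

/-!
In an eigenbasis of `C = U Λ Uᵀ` the error becomes `Z(t) - C⁺ = U (E (A + G)⁻¹ E - Λ⁺) Uᵀ`
with `A = Uᵀ Z₀⁻¹ U` positive definite, `E = diag (e^{2λᵢt})` and `G = diag gᵢ(t)`,
`gᵢ(t) = (e^{4λᵢt} - 1)/λᵢ`; conjugation by `U` does not change the Frobenius norm.
Since `A + G ≥ A` and `A + G ≥ G` in the Loewner order, the entries of `(A + G)⁻¹` are bounded
by the diagonal of `A⁻¹` and, once `G > 0`, by that of `G⁻¹`. The first bound controls the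
error on compact time intervals. For large `t` the resolvent expansion
`(A + G)⁻¹ = G⁻¹ - G⁻¹ (A - A (A + G)⁻¹ A) G⁻¹` leaves the diagonal term `E² G⁻¹ - Λ⁺` and a
term quadratic in `D = E G⁻¹`; both `E² G⁻¹ - Λ⁺` and `D` are `O(e^{-2μt})` with
`μ = minᵢ |λᵢ|`, while the second bound keeps `(A + G)⁻¹` bounded.
-/
open Real

attribute [local instance] Matrix.frobeniusNormedAddCommGroup

namespace Matrix

lemma PosSemidef.sq_apply_le_mul_apply_self {n : Type*} {X : Matrix n n ℝ} (hX : X.PosSemidef)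
    (i j : n) : X i j ^ 2 ≤ X i i * X j j := by
  have hdet := (hX.submatrix ![i, j]).det_nonneg
  have hsymm : X j i = X i j := by simpa using hX.isHermitian.apply i j
  simp only [det_fin_two, submatrix_apply, cons_val_zero, cons_val_one, hsymm] at hdet
  linarith

section Inverse

variable {n : Type*} [Fintype n] [DecidableEq n]

lemma PosDef.inv_apply_self_le_of_posSemidef_sub {A B : Matrix n n ℝ} (hA : A.PosDef)
    (hAB : (B - A).PosSemidef) (i : n) : B⁻¹ i i ≤ A⁻¹ i i := by
  have hB : B.PosDef := by simpa using hA.add_posSemidef hAB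
  have hAsymm : Aᵀ = A := hA.isHermitian
  set w := B⁻¹ *ᵥ Pi.single i 1
  set u := A⁻¹ *ᵥ Pi.single i 1
  have hBw : B *ᵥ w = Pi.single i 1 := by
    rw [mulVec_mulVec, mul_nonsing_inv _ hB.det_pos.ne'.isUnit, one_mulVec]
  have hAu : A *ᵥ u = Pi.single i 1 := by
    rw [mulVec_mulVec, mul_nonsing_inv _ hA.det_pos.ne'.isUnit, one_mulVec]
  have hwu : u ⬝ᵥ A *ᵥ w = w i := by
    rw [dotProduct_mulVec, ← mulVec_transpose, hAsymm, hAu, single_dotProduct, one_mul]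
  -- `wᵢ = w ⬝ B w ≥ w ⬝ A w` and `0 ≤ (w - u) ⬝ A (w - u) = w ⬝ A w - 2 wᵢ + uᵢ`
  have h1 := hAB.dotProduct_mulVec_nonneg w
  have h2 := hA.posSemidef.dotProduct_mulVec_nonneg (w - u)
  simp only [star_trivial, sub_mulVec, dotProduct_sub, mulVec_sub, sub_dotProduct, hBw, hAu,
    dotProduct_single, mul_one, hwu, Pi.sub_apply] at h1 h2
  have hwi : w i = B⁻¹ i i := by simp [w, mulVec_single]
  have hui : u i = A⁻¹ i i := by simp [u, mulVec_single]
  linarith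

lemma PosDef.abs_inv_apply_le_of_posSemidef_sub {A B : Matrix n n ℝ} (hA : A.PosDef)
    (hAB : (B - A).PosSemidef) {c : ℝ} (hc : ∀ i, A⁻¹ i i ≤ c) (i j : n) :
    |B⁻¹ i j| ≤ c := by
  have hX : (B⁻¹).PosSemidef := (by simpa using hA.add_posSemidef hAB : B.PosDef).inv.posSemidef
  have hii : B⁻¹ i i ≤ c := (hA.inv_apply_self_le_of_posSemidef_sub hAB i).trans (hc i)
  have hjj : B⁻¹ j j ≤ c := (hA.inv_apply_self_le_of_posSemidef_sub hAB j).trans (hc j)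
  have hii0 : 0 ≤ B⁻¹ i i := hX.diag_nonneg
  have hjj0 : 0 ≤ B⁻¹ j j := hX.diag_nonneg
  refine abs_le_of_sq_le_sq ?_ (hii0.trans hii)
  calc B⁻¹ i j ^ 2 ≤ B⁻¹ i i * B⁻¹ j j := hX.sq_apply_le_mul_apply_self i j
    _ ≤ c ^ 2 := by nlinarith

lemma inv_add_eq_sub {K : Type*} [CommRing K] (A G : Matrix n n K) (hAG : IsUnit (A + G).det)
    (hG : IsUnit G.det) : (A + G)⁻¹ = G⁻¹ - G⁻¹ * (A - A * (A + G)⁻¹ * A) * G⁻¹ := by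
  have hleft : (A + G)⁻¹ * A = 1 - (A + G)⁻¹ * G := by
    rw [eq_sub_iff_add_eq, ← Matrix.mul_add, nonsing_inv_mul _ hAG]
  have hright : A * (A + G)⁻¹ = 1 - G * (A + G)⁻¹ := by
    rw [eq_sub_iff_add_eq, ← Matrix.add_mul, mul_nonsing_inv _ hAG]
  have hmid : A - A * (A + G)⁻¹ * A = G - G * (A + G)⁻¹ * G := by
    rw [Matrix.mul_assoc A, hleft, Matrix.mul_sub, Matrix.mul_one, sub_sub_cancel,
      ← Matrix.mul_assoc, hright, Matrix.sub_mul, Matrix.one_mul]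
  rw [hmid]
  simp only [Matrix.mul_sub, Matrix.sub_mul, Matrix.mul_assoc, mul_nonsing_inv _ hG,
    nonsing_inv_mul_cancel_left _ _ hG, Matrix.mul_one, sub_sub_cancel]

lemma inv_diagonal_of_ne_zero {K : Type*} [Field K] {g : n → K} (hg : ∀ i, g i ≠ 0) :
    (diagonal g)⁻¹ = diagonal fun i => (g i)⁻¹ := by
  refine inv_eq_left_inv ?_
  rw [diagonal_mul_diagonal, ← diagonal_one]
  exact congrArg diagonal (funext fun i => inv_mul_cancel₀ (hg i))

lemma diagonal_mul_inv_add_diagonal_mul_diagonal_sub_eq {K : Type*} [Field K]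
    {A : Matrix n n K} {e g p : n → K} (hg : ∀ i, g i ≠ 0) (hAG : IsUnit (A + diagonal g).det) :
    diagonal e * (A + diagonal g)⁻¹ * diagonal e - diagonal p =
      (diagonal fun i => e i ^ 2 / g i - p i) - (diagonal fun i => e i / g i) *
        (A - A * (A + diagonal g)⁻¹ * A) * (diagonal fun i => e i / g i) := by
  have hG : IsUnit (diagonal g).det := by
    rw [det_diagonal]; exact (Finset.prod_ne_zero_iff.mpr fun i _ => hg i).isUnit
  have hGinv := inv_diagonal_of_ne_zero hg
  have hEG : diagonal e * (diagonal g)⁻¹ = diagonal fun i => e i / g i := by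
    rw [hGinv, diagonal_mul_diagonal]; simp_rw [div_eq_mul_inv]
  have hGE : (diagonal g)⁻¹ * diagonal e = diagonal fun i => e i / g i := by
    rw [hGinv, diagonal_mul_diagonal]; simp_rw [div_eq_mul_inv, mul_comm]
  have hEGE : diagonal e * (diagonal g)⁻¹ * diagonal e - diagonal p =
      diagonal fun i => e i ^ 2 / g i - p i := by
    rw [hEG, diagonal_mul_diagonal, ← diagonal_sub]; congr; funext i; ring
  calc _ = (diagonal e * (diagonal g)⁻¹ * diagonal e - diagonal p) -
        (diagonal e * (diagonal g)⁻¹) * (A - A * (A + diagonal g)⁻¹ * A) *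
          ((diagonal g)⁻¹ * diagonal e) := by
        conv_lhs => rw [inv_add_eq_sub A _ hAG hG]
        simp only [Matrix.mul_sub, Matrix.sub_mul, Matrix.mul_assoc]
        abel
    _ = _ := by rw [hEGE, hEG, hGE]

end Inverse

section Frobenius

variable {m n : Type*} [Fintype m] [Fintype n]

lemma frobenius_norm_eq_sqrt (M : Matrix m n ℝ) : ‖M‖ = √(∑ i, ∑ j, M i j ^ 2) := by
  simp [frobenius_norm_def, Real.sqrt_eq_rpow, Real.norm_eq_abs]

lemma sum_sum_sq_eq_trace (M : Matrix m n ℝ) : ∑ i, ∑ j, M i j ^ 2 = trace (Mᵀ * M) := by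
  simp only [trace, diag_apply, mul_apply, transpose_apply, sq]
  exact Finset.sum_comm

lemma frobenius_norm_le_of_abs_le {M : Matrix n n ℝ} {c : ℝ} (hc : 0 ≤ c)
    (h : ∀ i j, |M i j| ≤ c) : ‖M‖ ≤ Fintype.card n * c := by
  have hsum : ∑ i, ∑ j, M i j ^ 2 ≤ (Fintype.card n * c) ^ 2 := by
    calc ∑ i, ∑ j, M i j ^ 2 ≤ ∑ _i : n, ∑ _j : n, c ^ 2 := by
          refine Finset.sum_le_sum fun i _ => Finset.sum_le_sum fun j _ => ?_
          simpa only [sq_abs] using pow_le_pow_left₀ (abs_nonneg _) (h i j) 2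
      _ = _ := by simp; ring
  rw [frobenius_norm_eq_sqrt]
  exact (Real.sqrt_le_sqrt hsum).trans_eq (Real.sqrt_sq (by positivity))

lemma frobenius_norm_mul_mul_le (X Y Z : Matrix n n ℝ) : ‖X * Y * Z‖ ≤ ‖X‖ * ‖Y‖ * ‖Z‖ :=
  (frobenius_norm_mul _ _).trans
    (mul_le_mul_of_nonneg_right (frobenius_norm_mul _ _) (norm_nonneg _))

variable [DecidableEq n]

lemma frobenius_norm_diagonal_le {v : n → ℝ} {c : ℝ} (hc : 0 ≤ c) (hv : ∀ i, |v i| ≤ c) :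
    ‖diagonal v‖ ≤ Fintype.card n * c := by
  refine frobenius_norm_le_of_abs_le hc fun i j => ?_
  by_cases hij : i = j
  · simp [hij, hv j]
  · simp [hij, hc]

lemma frobenius_norm_conj_orthogonal {U : Matrix n n ℝ} (hU : Uᵀ * U = 1) (M : Matrix n n ℝ) :
    ‖U * M * Uᵀ‖ = ‖M‖ := by
  have hconj : (U * M * Uᵀ)ᵀ * (U * M * Uᵀ) = U * (Mᵀ * M) * Uᵀ := by
    simp only [transpose_mul, transpose_transpose, Matrix.mul_assoc]
    rw [← Matrix.mul_assoc Uᵀ U, hU, Matrix.one_mul]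
  rw [frobenius_norm_eq_sqrt, frobenius_norm_eq_sqrt, sum_sum_sq_eq_trace, sum_sum_sq_eq_trace,
    hconj, trace_mul_cycle, hU, Matrix.one_mul]

end Frobenius

section Conjugation

variable {n : Type*} [Fintype n] [DecidableEq n] {U : Matrix n n ℝ}

lemma conj_diagonal_apply (U : Matrix n n ℝ) (v : n → ℝ) (i j : n) :
    (U * diagonal v * Uᵀ) i j = ∑ k, U i k * U j k * v k := by
  rw [mul_apply]
  simp only [mul_diagonal, transpose_apply]
  exact Finset.sum_congr rfl fun k _ => by ring

lemma conj_mul_conj (hU : Uᵀ * U = 1) (P Q : Matrix n n ℝ) :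
    (U * P * Uᵀ) * (U * Q * Uᵀ) = U * (P * Q) * Uᵀ := by
  simp only [Matrix.mul_assoc]
  rw [← Matrix.mul_assoc Uᵀ U, hU, Matrix.one_mul]

lemma inv_conj (hU : Uᵀ * U = 1) (X : Matrix n n ℝ) : (U * X * Uᵀ)⁻¹ = U * X⁻¹ * Uᵀ := by
  rw [Matrix.mul_inv_rev, Matrix.mul_inv_rev, inv_eq_left_inv hU, inv_eq_right_inv hU,
    Matrix.mul_assoc]

lemma exp_smul_conj_diagonal (hU : Uᵀ * U = 1) (lam : n → ℝ) (c : ℝ) :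
    NormedSpace.exp (c • (U * diagonal lam * Uᵀ)) =
      U * diagonal (fun i => exp (c * lam i)) * Uᵀ := by
  have hUinv : U⁻¹ = Uᵀ := inv_eq_left_inv hU
  have hUunit : IsUnit U := (isUnit_iff_isUnit_det U).mpr (isUnit_det_of_left_inverse hU)
  rw [← smul_mul_assoc, ← mul_smul_comm, ← diagonal_smul, ← hUinv, exp_conj U _ hUunit,
    exp_diagonal]
  congr
  funext i
  simp [Real.exp_eq_exp_ℝ]

end Conjugation

section DiagonalPerturbation

variable {n : Type*} [Fintype n] [DecidableEq n] {A : Matrix n n ℝ} {e g p : n → ℝ}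

lemma norm_diagonal_mul_inv_add_diagonal_mul_diagonal_sub_le (hA : A.PosDef)
    (hg : ∀ i, 0 ≤ g i) {a b c : ℝ} (ha : 0 ≤ a) (hb : 0 ≤ b) (hc0 : 0 ≤ c)
    (hc : ∀ i, A⁻¹ i i ≤ c) (he : ∀ i, |e i| ≤ a) (hp : ∀ i, |p i| ≤ b) :
    ‖diagonal e * (A + diagonal g)⁻¹ * diagonal e - diagonal p‖ ≤
      (Fintype.card n * a) ^ 2 * (Fintype.card n * c) + Fintype.card n * b := by
  have hAB : (A + diagonal g - A).PosSemidef := by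
    rw [add_sub_cancel_left]; exact posSemidef_diagonal_iff.mpr hg
  have hE := frobenius_norm_diagonal_le ha he
  have hBinv := frobenius_norm_le_of_abs_le hc0 (hA.abs_inv_apply_le_of_posSemidef_sub hAB hc)
  have hP := frobenius_norm_diagonal_le hb hp
  calc _ ≤ ‖diagonal e * (A + diagonal g)⁻¹ * diagonal e‖ + ‖diagonal p‖ := norm_sub_le _ _
    _ ≤ ‖diagonal e‖ * ‖(A + diagonal g)⁻¹‖ * ‖diagonal e‖ + ‖diagonal p‖ := by
      gcongr
      exact frobenius_norm_mul_mul_le _ _ _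
    _ ≤ (Fintype.card n * a) * (Fintype.card n * c) * (Fintype.card n * a) +
        Fintype.card n * b := by
      gcongr
    _ = _ := by ring

lemma norm_diagonal_mul_inv_add_diagonal_mul_diagonal_sub_le_of_pos (hA : A.PosDef)
    (hg : ∀ i, 0 < g i) {c ε : ℝ} (hc : 0 ≤ c) (hε : 0 ≤ ε) (hε1 : ε ≤ 1)
    (hginv : ∀ i, (g i)⁻¹ ≤ c) (he : ∀ i, |e i / g i| ≤ c * ε)
    (hp : ∀ i, |e i ^ 2 / g i - p i| ≤ c * ε) :
    ‖diagonal e * (A + diagonal g)⁻¹ * diagonal e - diagonal p‖ ≤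
      (Fintype.card n * c +
        (Fintype.card n * c) ^ 2 * (‖A‖ + ‖A‖ ^ 2 * (Fintype.card n * c))) * ε := by
  set N : ℝ := (Fintype.card n : ℝ)
  have hGPD : (diagonal g).PosDef := posDef_diagonal_iff.mpr hg
  have hBG : (A + diagonal g - diagonal g).PosSemidef := by
    rw [add_sub_cancel_right]; exact hA.posSemidef
  have hB : (A + diagonal g).PosDef :=
    hA.add_posSemidef (posSemidef_diagonal_iff.mpr fun i => (hg i).le)
  have hBinv : ‖(A + diagonal g)⁻¹‖ ≤ N * c := frobenius_norm_le_of_abs_le hc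
    (hGPD.abs_inv_apply_le_of_posSemidef_sub hBG fun i => by
      simpa [inv_diagonal_of_ne_zero fun i => (hg i).ne'] using hginv i)
  have hM : ‖A - A * (A + diagonal g)⁻¹ * A‖ ≤ ‖A‖ + ‖A‖ ^ 2 * (N * c) := by
    calc _ ≤ ‖A‖ + ‖A * (A + diagonal g)⁻¹ * A‖ := norm_sub_le _ _
      _ ≤ ‖A‖ + ‖A‖ * ‖(A + diagonal g)⁻¹‖ * ‖A‖ := by
        gcongr; exact frobenius_norm_mul_mul_le _ _ _
      _ ≤ ‖A‖ + ‖A‖ * (N * c) * ‖A‖ := by gcongr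
      _ = _ := by ring
  have hD := frobenius_norm_diagonal_le (by positivity) he
  have hN := frobenius_norm_diagonal_le (by positivity) hp
  rw [diagonal_mul_inv_add_diagonal_mul_diagonal_sub_eq (fun i => (hg i).ne')
    hB.det_pos.ne'.isUnit]
  set M := A - A * (A + diagonal g)⁻¹ * A
  calc _ ≤ ‖diagonal fun i => e i ^ 2 / g i - p i‖ +
        ‖(diagonal fun i => e i / g i) * M * (diagonal fun i => e i / g i)‖ := norm_sub_le _ _
    _ ≤ ‖diagonal fun i => e i ^ 2 / g i - p i‖ +
        ‖diagonal fun i => e i / g i‖ * ‖M‖ * ‖diagonal fun i => e i / g i‖ := by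
        gcongr; exact frobenius_norm_mul_mul_le _ _ _
    _ ≤ N * (c * ε) + N * (c * ε) * (‖A‖ + ‖A‖ ^ 2 * (N * c)) * (N * (c * ε)) := by gcongr
    _ = (N * c + (N * c) ^ 2 * (‖A‖ + ‖A‖ ^ 2 * (N * c)) * ε) * ε := by ring
    _ ≤ _ := mul_le_mul_of_nonneg_right
        (add_le_add le_rfl (mul_le_of_le_one_right (by positivity) hε1)) hε

end DiagonalPerturbation

end Matrix

lemma abs_le_sum_abs {ι : Type*} [Fintype ι] (f : ι → ℝ) (i : ι) : |f i| ≤ ∑ j, |f j| :=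
  Finset.single_le_sum (f := fun j => |f j|) (fun _ _ => abs_nonneg _) (Finset.mem_univ i)

lemma exists_pos_forall_le_abs {ι : Type*} [Fintype ι] {f : ι → ℝ} (hf : ∀ i, f i ≠ 0) :
    ∃ μ > 0, ∀ i, μ ≤ |f i| := by
  rcases isEmpty_or_nonempty ι with hι | hι
  · exact ⟨1, one_pos, isEmptyElim⟩
  · obtain ⟨i₀, -, hi₀⟩ :=
      Finset.exists_min_image Finset.univ (fun i => |f i|) Finset.univ_nonempty
    exact ⟨|f i₀|, abs_pos.mpr (hf i₀), fun i => hi₀ i (Finset.mem_univ i)⟩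

lemma exists_pos_forall_le_mul_exp_neg {f : ℝ → ℝ} {T K₀ K₁ ρ : ℝ} (hρ : 0 ≤ ρ)
    (hsmall : ∀ t ∈ Set.Icc 0 T, f t ≤ K₁) (hlarge : ∀ t, T ≤ t → f t ≤ K₀ * exp (-ρ * t)) :
    ∃ K > 0, ∀ t, 0 ≤ t → f t ≤ K * exp (-ρ * t) := by
  refine ⟨|K₀| + |K₁| * exp (ρ * T) + 1, by positivity, fun t ht => ?_⟩
  have hexp : 0 < exp (-ρ * t) := exp_pos _
  rcases le_total t T with htT | hTt
  · have hone : 1 ≤ exp (ρ * T) * exp (-ρ * t) := by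
      rw [← exp_add]; exact one_le_exp (by nlinarith)
    calc f t ≤ |K₁| * 1 := (hsmall t ⟨ht, htT⟩).trans (by simp [le_abs_self])
      _ ≤ |K₁| * (exp (ρ * T) * exp (-ρ * t)) := by gcongr
      _ ≤ _ := by nlinarith [abs_nonneg K₀]
  · calc f t ≤ K₀ * exp (-ρ * t) := hlarge t hTt
      _ ≤ _ := mul_le_mul_of_nonneg_right (by
          linarith [le_abs_self K₀, mul_nonneg (abs_nonneg K₁) (exp_pos (ρ * T)).le]) hexp.le

/-- `growthIntegral l t = 4 ∫₀ᵗ e^{4ls} ds` when `l ≠ 0`. -/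
noncomputable def growthIntegral (l t : ℝ) : ℝ := (exp (4 * l * t) - 1) / l

lemma four_mul_integral_exp_eq_growthIntegral {l : ℝ} (hl : l ≠ 0) (t : ℝ) :
    4 * ∫ s in (0:ℝ)..t, exp (4 * s * l) = growthIntegral l t := by
  have h4l : 4 * l ≠ 0 := by positivity
  simp_rw [show ∀ s : ℝ, 4 * s * l = (4 * l) * s from fun s => by ring]
  rw [intervalIntegral.integral_comp_mul_left (fun x => exp x) h4l, integral_exp, growthIntegral,
    smul_eq_mul, mul_zero, exp_zero]
  field_simp

lemma growthIntegral_nonneg {l t : ℝ} (ht : 0 ≤ t) : 0 ≤ growthIntegral l t := by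
  unfold growthIntegral
  rcases lt_trichotomy l 0 with hl | rfl | hl
  · exact div_nonneg_of_nonpos (by simp; nlinarith) hl.le
  · simp
  · exact div_nonneg (by simp; positivity) hl.le

lemma growthIntegral_pos_inv_le_exp_div_eq {l t x : ℝ} (hl : l ≠ 0)
    (hx : exp (-(2 * |l| * t)) = x) (hx1 : x < 1) :
    0 < growthIntegral l t ∧ (growthIntegral l t)⁻¹ ≤ |l| / (1 - x ^ 2) ∧
      exp (2 * l * t) / growthIntegral l t = |l| / (1 - x ^ 2) * x ∧
      exp (2 * l * t) ^ 2 / growthIntegral l t - max l 0 = |l| / (1 - x ^ 2) * x ^ 2 := by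
  have hx0 : 0 < x := hx ▸ exp_pos _
  have hx2 : x ^ 2 < 1 := by nlinarith
  have hsq : exp (4 * l * t) = exp (2 * l * t) ^ 2 := by rw [sq, ← exp_add]; ring_nf
  rw [growthIntegral, hsq]
  rcases hl.lt_or_gt with hneg | hpos
  · have he : exp (2 * l * t) = x := by rw [← hx, abs_of_neg hneg]; ring_nf
    rw [he, max_eq_right hneg.le, abs_of_neg hneg]
    have hq : x ^ 2 - 1 ≠ 0 := by nlinarith
    have hq' : 1 - x ^ 2 ≠ 0 := by nlinarith
    refine ⟨div_pos_of_neg_of_neg (by nlinarith) hneg, le_of_eq ?_, ?_, ?_⟩ <;>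
      field_simp <;> ring
  · have he : exp (2 * l * t) = x⁻¹ := by rw [← hx, abs_of_pos hpos, ← Real.exp_neg]; ring_nf
    rw [he, max_eq_left hpos.le, abs_of_pos hpos]
    have hq : 1 - x ^ 2 ≠ 0 := by nlinarith
    have hg : x⁻¹ ^ 2 - 1 = (1 - x ^ 2) / x ^ 2 := by field_simp
    rw [hg]
    refine ⟨div_pos (div_pos (by nlinarith) (by positivity)) hpos, ?_, by field_simp,
      by field_simp; ring⟩
    rw [inv_div, div_div_eq_mul_div]
    gcongr
    nlinarith

lemma growthIntegral_bounds {l t ε : ℝ} (hl : l ≠ 0) (hx : exp (-(2 * |l| * t)) ≤ ε)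
    (hε : ε ^ 2 ≤ 1 / 2) :
    0 < growthIntegral l t ∧ (growthIntegral l t)⁻¹ ≤ 2 * |l| ∧
      |exp (2 * l * t) / growthIntegral l t| ≤ 2 * |l| * ε ∧
      |exp (2 * l * t) ^ 2 / growthIntegral l t - max l 0| ≤ 2 * |l| * ε := by
  set x := exp (-(2 * |l| * t))
  have hx0 : 0 < x := exp_pos _
  have hx2 : x ^ 2 ≤ 1 / 2 := by nlinarith
  have hx1 : x ≤ 1 := by nlinarith
  obtain ⟨hg0, hginv, he, he2⟩ :=
    growthIntegral_pos_inv_le_exp_div_eq (t := t) hl rfl (by nlinarith)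
  set r := |l| / (1 - x ^ 2)
  have hr0 : 0 ≤ r := div_nonneg (abs_nonneg l) (by linarith)
  have hr : r ≤ 2 * |l| := by rw [div_le_iff₀ (by linarith)]; nlinarith [abs_nonneg l]
  have hrx : r * x ≤ 2 * |l| * ε := mul_le_mul hr hx hx0.le (by positivity)
  refine ⟨hg0, hginv.trans hr, ?_, ?_⟩
  · rwa [he, abs_of_nonneg (by positivity)]
  · rw [he2, abs_of_nonneg (by positivity)]
    exact le_trans (by nlinarith [mul_le_mul_of_nonneg_left hx1 (mul_nonneg hr0 hx0.le)]) hrx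

/-- The error `Z(t) - C⁺` in an eigenbasis of `C`, where `C` becomes `diagonal lam` and `Z0⁻¹`
becomes `A`. -/
noncomputable def riccatiError {n : Type*} [Fintype n] [DecidableEq n] (A : Matrix n n ℝ)
    (lam : n → ℝ) (t : ℝ) : Matrix n n ℝ :=
  diagonal (fun i => exp (2 * lam i * t)) * (A + diagonal fun i => growthIntegral (lam i) t)⁻¹ *
    diagonal (fun i => exp (2 * lam i * t)) - diagonal fun i => max (lam i) 0

section RiccatiError

variable {n : Type*} [Fintype n] [DecidableEq n] {A : Matrix n n ℝ} {lam : n → ℝ}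

lemma norm_riccatiError_bounded (hA : A.PosDef) (T : ℝ) :
    ∃ K, ∀ t ∈ Set.Icc 0 T, ‖riccatiError A lam t‖ ≤ K := by
  set L := ∑ i, |lam i|
  have hL : ∀ i, |lam i| ≤ L := abs_le_sum_abs lam
  have hL0 : 0 ≤ L := Finset.sum_nonneg fun i _ => abs_nonneg (lam i)
  have hc : ∀ i, A⁻¹ i i ≤ ∑ j, |A⁻¹ j j| := fun i =>
    (le_abs_self _).trans (abs_le_sum_abs (fun j => A⁻¹ j j) i)
  refine ⟨_, fun t ht => Matrix.norm_diagonal_mul_inv_add_diagonal_mul_diagonal_sub_le hA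
    (fun i => growthIntegral_nonneg ht.1) (exp_pos (2 * L * T)).le hL0
    (Finset.sum_nonneg fun j _ => abs_nonneg _) hc (fun i => ?_) (fun i => ?_)⟩
  · rw [abs_of_pos (exp_pos _), exp_le_exp]
    nlinarith [hL i, le_abs_self (lam i), ht.1, ht.2]
  · rw [abs_of_nonneg (le_max_right _ _)]
    exact max_le ((le_abs_self _).trans (hL i)) hL0

lemma norm_riccatiError_le_exp (hA : A.PosDef) (hlam : ∀ i, lam i ≠ 0) {μ : ℝ} (hμ : 0 < μ)
    (hμlam : ∀ i, μ ≤ |lam i|) :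
    ∃ K, ∀ t, 1 / (4 * μ) ≤ t → ‖riccatiError A lam t‖ ≤ K * exp (-(2 * μ) * t) := by
  set c := 2 * ∑ i, |lam i|
  have hc : ∀ i, 2 * |lam i| ≤ c := fun i => by linarith [abs_le_sum_abs lam i]
  set N : ℝ := (Fintype.card n : ℝ)
  refine ⟨N * c + (N * c) ^ 2 * (‖A‖ + ‖A‖ ^ 2 * (N * c)), fun t ht => ?_⟩
  have ht1 : 1 ≤ 4 * μ * t := by rwa [div_le_iff₀ (by positivity), mul_comm] at ht
  set ε := exp (-(2 * μ) * t)
  have hε2 : ε ^ 2 ≤ 1 / 2 := by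
    rw [sq, ← exp_add]
    exact (exp_le_exp.mpr (by linarith)).trans exp_neg_one_lt_half.le
  have hε1 : ε ≤ 1 := exp_le_one_iff.mpr (by nlinarith)
  have hbounds := fun i => growthIntegral_bounds (hlam i)
    (exp_le_exp.mpr (by nlinarith [hμlam i] : -(2 * |lam i| * t) ≤ -(2 * μ) * t)) hε2
  exact Matrix.norm_diagonal_mul_inv_add_diagonal_mul_diagonal_sub_le_of_pos hA
    (fun i => (hbounds i).1) (by positivity) (exp_pos _).le hε1
    (fun i => (hbounds i).2.1.trans (hc i))
    (fun i => (hbounds i).2.2.1.trans (by gcongr; exact hc i))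
    (fun i => (hbounds i).2.2.2.trans (by gcongr; exact hc i))

end RiccatiError

section Riccati

variable {d : ℕ} {Z0 U : Matrix (Fin d) (Fin d) ℝ} {lam : Fin d → ℝ}

lemma ne_zero_of_isUnit_det_conj_diagonal (h : IsUnit (U * diagonal lam * Uᵀ).det) (i : Fin d) :
    lam i ≠ 0 := by
  intro hi
  simp [det_mul, det_diagonal, Finset.prod_eq_zero (Finset.mem_univ i) hi] at h

lemma Mfun_conj_diagonal (hU : Uᵀ * U = 1) (hlam : ∀ i, lam i ≠ 0) (t : ℝ) :
    Mfun (U * diagonal lam * Uᵀ) Z0 t =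
      U * (Uᵀ * Z0⁻¹ * U + diagonal fun i => growthIntegral (lam i) t) * Uᵀ := by
  rw [Mfun, Matrix.mul_add, Matrix.add_mul]
  congr 1
  · simp only [← Matrix.mul_assoc, mul_eq_one_comm.mp hU, Matrix.one_mul]
    rw [Matrix.mul_assoc, mul_eq_one_comm.mp hU, Matrix.mul_one]
  · ext i j
    simp_rw [of_apply, Matrix.exp_smul_conj_diagonal hU, Matrix.conj_diagonal_apply]
    rw [intervalIntegral.integral_finsetSum fun k _ =>
      (by fun_prop : Continuous _).intervalIntegrable _ _, Finset.mul_sum]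
    refine Finset.sum_congr rfl fun k _ => ?_
    rw [intervalIntegral.integral_const_mul, mul_left_comm,
      four_mul_integral_exp_eq_growthIntegral (hlam k)]

lemma Zfun_conj_diagonal (hU : Uᵀ * U = 1) (hlam : ∀ i, lam i ≠ 0) (t : ℝ) :
    Zfun (U * diagonal lam * Uᵀ) Z0 t =
      U * (diagonal (fun i => exp (2 * lam i * t)) *
        (Uᵀ * Z0⁻¹ * U + diagonal fun i => growthIntegral (lam i) t)⁻¹ *
        diagonal (fun i => exp (2 * lam i * t))) * Uᵀ := by
  rw [Zfun, Mfun_conj_diagonal hU hlam, Matrix.exp_smul_conj_diagonal hU, Matrix.inv_conj hU,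
    Matrix.conj_mul_conj hU, Matrix.conj_mul_conj hU]
  simp_rw [mul_right_comm (2 : ℝ) t]

lemma frobNorm_Zfun_sub_eq (hU : Uᵀ * U = 1) (hlam : ∀ i, lam i ≠ 0) (t : ℝ) :
    frobNorm (Zfun (U * diagonal lam * Uᵀ) Z0 t - U * diagonal (fun i => max (lam i) 0) * Uᵀ) =
      ‖riccatiError (Uᵀ * Z0⁻¹ * U) lam t‖ := by
  rw [Zfun_conj_diagonal hU hlam, ← Matrix.sub_mul, ← Matrix.mul_sub, frobNorm,
    ← Matrix.frobenius_norm_eq_sqrt, Matrix.frobenius_norm_conj_orthogonal hU, riccatiError]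

end Riccati

theorem riccati_flow_exponential_convergence_general
    (d : ℕ) (C Z0 : Matrix (Fin d) (Fin d) ℝ)
    (hCinv : IsUnit C.det)
    (hZ0pd : Z0.PosDef)
    (U : Matrix (Fin d) (Fin d) ℝ) (lam : Fin d → ℝ)
    (hU : Uᵀ * U = 1)
    (hCdec : C = U * Matrix.diagonal lam * Uᵀ)
    (Cp : Matrix (Fin d) (Fin d) ℝ)
    (hCp : Cp = U * Matrix.diagonal (fun i => max (lam i) 0) * Uᵀ) :
    ∃ K > (0:ℝ), ∃ ρ > (0:ℝ), ∀ t : ℝ, 0 ≤ t →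
      frobNorm (Zfun C Z0 t - Cp) ≤ K * Real.exp (-ρ * t) := by
  subst hCdec hCp
  have hlam := ne_zero_of_isUnit_det_conj_diagonal hCinv
  obtain ⟨μ, hμ, hμlam⟩ := exists_pos_forall_le_abs hlam
  have hA : (Uᵀ * Z0⁻¹ * U).PosDef := by
    simpa using hZ0pd.inv.conjTranspose_mul_mul_same (B := U) fun v w h => by
      simpa [mulVec_mulVec, hU] using congrArg (Uᵀ *ᵥ ·) h
  obtain ⟨K₁, hsmall⟩ := norm_riccatiError_bounded hA (1 / (4 * μ))
  obtain ⟨K₀, hlarge⟩ := norm_riccatiError_le_exp hA hlam hμ hμlam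
  obtain ⟨K, hK, hbound⟩ := exists_pos_forall_le_mul_exp_neg (by positivity) hsmall hlarge
  exact ⟨K, hK, 2 * μ, by positivity, fun t ht =>
    (frobNorm_Zfun_sub_eq hU hlam t).trans_le (hbound t ht)⟩

/-- **Exponential convergence of the Riccati/Oja flow.** Let `C` be real symmetric and
invertible, with spectral decomposition `C = U * diagonal lam * Uᵀ` (`U` orthogonal,
`lam` nonincreasing), positive part `Cp = U * diagonal (lam⁺) * Uᵀ`, and let `Z0` be
real symmetric positive definite. Then the solution
`Z(t) = e^{2Ct} (Z0⁻¹ + 4∫₀ᵗ e^{4Cs} ds)⁻¹ e^{2Ct}` of the Riccati equation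
`Z' = 2(CZ + ZC) - 4Z²`, `Z(0) = Z0`, converges exponentially fast to `Cp`: there
are `K > 0` and `ρ > 0` with `‖Z(t) - Cp‖_F ≤ K e^{-ρ t}` for all `t ≥ 0`. -/
theorem riccati_flow_exponential_convergence
    (d : ℕ) (C Z0 : Matrix (Fin d) (Fin d) ℝ) (hC : C.IsSymm)
    (hCinv : IsUnit C.det)
    (hZ0 : Z0.IsSymm) (hZ0pd : Z0.PosDef)
    (U : Matrix (Fin d) (Fin d) ℝ) (lam : Fin d → ℝ)
    (hU : Uᵀ * U = 1) (hlam : Antitone lam)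
    (hCdec : C = U * Matrix.diagonal lam * Uᵀ)
    (Cp : Matrix (Fin d) (Fin d) ℝ)
    (hCp : Cp = U * Matrix.diagonal (fun i => max (lam i) 0) * Uᵀ) :
    ∃ K > (0:ℝ), ∃ ρ > (0:ℝ), ∀ t : ℝ, 0 ≤ t →
      frobNorm (Zfun C Z0 t - Cp) ≤ K * Real.exp (-ρ * t) :=
  riccati_flow_exponential_convergence_general d C Z0 hCinv hZ0pd U lam hU hCdec Cp hCp
end

section
/- Let U : ℝ^N → ℝ be a continuous coercive function (U(x) → ∞ as ‖x‖ → ∞) such that e^{−U} is Lebesgue-integrable. Then U attains its infimum, the set S = argmin U is nonempty and compact, e^{−βU} is integrable for every β ≥ 1, and the Gibbs probability measures μ_β with density proportional to e^{−β U(x)} concentrate on S as β → ∞: for every open set O containing S, μ_β(ℝ^N \ O) → 0 as β → ∞. -/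
/-!
Coercivity makes the sublevel sets of `U` compact, so `U` attains its minimum `m`, and on the
closed set `Oᶜ`, which misses the argmin, it stays above some `c > m`. Near a minimiser `U < c'`
on a ball `B` for any `c' ∈ (m, c)`, so the partition function is at least `e^{-βc'} |B|`, while
`∫_{Oᶜ} e^{-βU} ≤ e^{-(β-1)c} ∫ e^{-U}`; hence `μ_β (Oᶜ) = O(e^{-β(c - c')})`.
The Gibbs measure `μ_β` is Mathlib's exponentially tilted measure
`volume.tilted (fun x => -β * U x)`.
-/

open MeasureTheory Filter Topology

section Coercive

variable {α : Type*} [TopologicalSpace α] {U : α → ℝ}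

theorem Continuous.isCompact_preimage_Iic_of_tendsto_cocompact (hU : Continuous U)
    (hcoer : Tendsto U (cocompact α) atTop) (c : ℝ) : IsCompact (U ⁻¹' Set.Iic c) := by
  obtain ⟨K, hK, hsub⟩ := mem_cocompact'.mp (hcoer.eventually (eventually_gt_atTop c))
  exact hK.of_isClosed_subset (isClosed_Iic.preimage hU) fun x hx =>
    hsub (not_lt.mpr hx : ¬c < U x)

theorem IsClosed.exists_gt_forall_le_of_tendsto_cocompact {F : Set α} {m : ℝ} (hF : IsClosed F)
    (hU : ContinuousOn U F) (hcoer : Tendsto U (cocompact α) atTop) (hm : ∀ x ∈ F, m < U x) :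
    ∃ c, m < c ∧ ∀ x ∈ F, c ≤ U x := by
  rcases F.eq_empty_or_nonempty with rfl | ⟨x₁, hx₁⟩
  · exact ⟨m + 1, by linarith, fun x hx => hx.elim⟩
  obtain ⟨z, hzF, hz⟩ := hU.exists_isMinOn' hF hx₁
    ((hcoer.eventually (eventually_ge_atTop (U x₁))).filter_mono inf_le_left)
  exact ⟨U z, hm z hzF, fun x hx => hz hx⟩

end Coercive

section Gibbs

variable {α : Type*} {mα : MeasurableSpace α} {μ : Measure α} {U : α → ℝ} {β c : ℝ}

theorem Real.exp_neg_mul_le_of_le {u : ℝ} (hβ : 1 ≤ β) (hc : c ≤ u) :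
    Real.exp (-β * u) ≤ Real.exp (-(β - 1) * c) * Real.exp (-u) := by
  rw [← Real.exp_add, Real.exp_le_exp]
  nlinarith

theorem integrable_exp_neg_mul_of_one_le {m : ℝ} (hm : ∀ x, m ≤ U x)
    (hint : Integrable (fun x => Real.exp (-U x)) μ) (hβ : 1 ≤ β) :
    Integrable (fun x => Real.exp (-β * U x)) μ := by
  have hUm : AEMeasurable U μ :=
    aemeasurable_neg_iff.mp (Real.aemeasurable_of_aemeasurable_exp hint.aemeasurable)
  refine (hint.const_mul (Real.exp (-(β - 1) * m))).mono'
    (Real.measurable_exp.comp_aemeasurable (hUm.const_mul _)).aestronglyMeasurable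
    (ae_of_all _ fun x => ?_)
  rw [Real.norm_of_nonneg (Real.exp_pos _).le]
  exact Real.exp_neg_mul_le_of_le hβ (hm x)

theorem setIntegral_exp_neg_mul_le {s : Set α} (hs : MeasurableSet s) (hc : ∀ x ∈ s, c ≤ U x)
    (hint : Integrable (fun x => Real.exp (-U x)) μ) (hβ : 1 ≤ β) :
    ∫ x in s, Real.exp (-β * U x) ∂μ ≤
      Real.exp (-(β - 1) * c) * ∫ x, Real.exp (-U x) ∂μ :=
  calc ∫ x in s, Real.exp (-β * U x) ∂μ
      ≤ ∫ x in s, Real.exp (-(β - 1) * c) * Real.exp (-U x) ∂μ :=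
        integral_mono_of_nonneg (ae_of_all _ fun _ => (Real.exp_pos _).le)
          (hint.const_mul _).integrableOn
          ((ae_restrict_iff' hs).mpr
            (ae_of_all _ fun x hx => Real.exp_neg_mul_le_of_le hβ (hc x hx)))
    _ ≤ ∫ x, Real.exp (-(β - 1) * c) * Real.exp (-U x) ∂μ :=
        setIntegral_le_integral (hint.const_mul _) (ae_of_all _ fun _ => by positivity)
    _ = Real.exp (-(β - 1) * c) * ∫ x, Real.exp (-U x) ∂μ := integral_const_mul _ _

theorem exp_neg_mul_mul_measureReal_le_integral {B : Set α} (hB : MeasurableSet B)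
    (hBtop : μ B ≠ ⊤) (hc : ∀ x ∈ B, U x ≤ c) (hβ : 0 ≤ β)
    (hint : Integrable (fun x => Real.exp (-β * U x)) μ) :
    Real.exp (-β * c) * μ.real B ≤ ∫ x, Real.exp (-β * U x) ∂μ :=
  calc Real.exp (-β * c) * μ.real B ≤ ∫ x in B, Real.exp (-β * U x) ∂μ :=
        setIntegral_ge_of_const_le_real hB hBtop
          (fun x hx => Real.exp_le_exp.mpr (by nlinarith [hc x hx])) hint.integrableOn
    _ ≤ ∫ x, Real.exp (-β * U x) ∂μ :=
        setIntegral_le_integral hint (ae_of_all _ fun _ => (Real.exp_pos _).le)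

theorem tilted_neg_mul_apply_le [SFinite μ] {m c' : ℝ} {s B : Set α} (hm : ∀ x, m ≤ U x)
    (hint : Integrable (fun x => Real.exp (-U x)) μ) (hs : MeasurableSet s)
    (hsc : ∀ x ∈ s, c ≤ U x) (hB : MeasurableSet B) (hB₀ : μ B ≠ 0)
    (hBtop : μ B ≠ ⊤) (hBc : ∀ x ∈ B, U x ≤ c') (hβ : 1 ≤ β) :
    μ.tilted (fun x => -β * U x) s ≤ ENNReal.ofReal
      ((∫ x, Real.exp (-U x) ∂μ) / μ.real B * Real.exp c * Real.exp (-(c - c') * β)) := by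
  have hBpos : 0 < μ.real B := ENNReal.toReal_pos hB₀ hBtop
  rw [tilted_apply_eq_ofReal_integral, integral_div]
  refine ENNReal.ofReal_le_ofReal ?_
  calc (∫ x in s, Real.exp (-β * U x) ∂μ) / ∫ x, Real.exp (-β * U x) ∂μ
      ≤ Real.exp (-(β - 1) * c) * (∫ x, Real.exp (-U x) ∂μ)
          / (Real.exp (-β * c') * μ.real B) :=
        div_le_div₀
          (mul_nonneg (Real.exp_pos _).le (integral_nonneg fun _ => (Real.exp_pos _).le))
          (setIntegral_exp_neg_mul_le hs hsc hint hβ) (by positivity)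
          (exp_neg_mul_mul_measureReal_le_integral hB hBtop hBc (by linarith)
            (integrable_exp_neg_mul_of_one_le hm hint hβ))
    _ = (∫ x, Real.exp (-U x) ∂μ) / μ.real B * Real.exp c * Real.exp (-(c - c') * β) := by
        rw [mul_div_mul_comm, ← Real.exp_sub, mul_assoc, ← Real.exp_add, mul_comm]
        ring_nf

theorem tendsto_tilted_neg_mul_apply_atTop [SFinite μ] {m c' : ℝ} {s B : Set α}
    (hm : ∀ x, m ≤ U x) (hint : Integrable (fun x => Real.exp (-U x)) μ) (hs : MeasurableSet s)
    (hsc : ∀ x ∈ s, c ≤ U x) (hB : MeasurableSet B) (hB₀ : μ B ≠ 0)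
    (hBtop : μ B ≠ ⊤) (hBc : ∀ x ∈ B, U x ≤ c') (hcc' : c' < c) :
    Tendsto (fun β => μ.tilted (fun x => -β * U x) s) atTop (𝓝 0) := by
  have hdecay : Tendsto (fun β => (∫ x, Real.exp (-U x) ∂μ) / μ.real B * Real.exp c
      * Real.exp (-(c - c') * β)) atTop (𝓝 0) := by
    simpa using (Real.tendsto_exp_atBot.comp
      (tendsto_id.const_mul_atTop_of_neg (by linarith : -(c - c') < 0))).const_mul
      ((∫ x, Real.exp (-U x) ∂μ) / μ.real B * Real.exp c)
  refine tendsto_of_tendsto_of_tendsto_of_le_of_le' tendsto_const_nhds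
    (ENNReal.ofReal_zero ▸ ENNReal.tendsto_ofReal hdecay)
    (Eventually.of_forall fun _ => zero_le) ?_
  filter_upwards [eventually_ge_atTop 1] with β hβ
  exact tilted_neg_mul_apply_le hm hint hs hsc hB hB₀ hBtop hBc hβ

end Gibbs

/-- **Zero-temperature concentration of Gibbs measures.** Let `U : ℝ^N → ℝ` be continuous
and coercive with `e^{-U}` Lebesgue-integrable. Then `U` attains its infimum, the set
`S = argmin U` is nonempty and compact, `e^{-βU}` is integrable for every `β ≥ 1`, the
Gibbs measures `μ_β` with density proportional to `e^{-βU}` are probability measures,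
and they concentrate on `S` as `β → ∞`: for every open set `O ⊇ S`,
`μ_β (Oᶜ) → 0` as `β → ∞`. -/
theorem gibbs_measure_zero_temperature_concentration
    (N : ℕ) (U : (Fin N → ℝ) → ℝ) (hU : Continuous U)
    (hcoer : Tendsto U (Filter.comap norm atTop) atTop)
    (hint : Integrable (fun x => Real.exp (-U x))) :
    ({x | ∀ y, U x ≤ U y} : Set (Fin N → ℝ)).Nonempty ∧
    IsCompact ({x | ∀ y, U x ≤ U y} : Set (Fin N → ℝ)) ∧
    (∀ β : ℝ, 1 ≤ β → Integrable (fun x => Real.exp (-β * U x))) ∧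
    (∀ β : ℝ, 1 ≤ β → IsProbabilityMeasure
      (volume.withDensity fun x =>
        ENNReal.ofReal (Real.exp (-β * U x) / ∫ y, Real.exp (-β * U y)))) ∧
    (∀ O : Set (Fin N → ℝ), IsOpen O → {x | ∀ y, U x ≤ U y} ⊆ O →
      Tendsto (fun β : ℝ =>
        (volume.withDensity fun x =>
          ENNReal.ofReal (Real.exp (-β * U x) / ∫ y, Real.exp (-β * U y))) Oᶜ)
        atTop (𝓝 0)) := by
  have hcoco : Tendsto U (cocompact _) atTop :=
    hcoer.mono_left (map_le_iff_le_comap.mp tendsto_norm_cocompact_atTop)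
  obtain ⟨x₀, hx₀⟩ := hU.exists_forall_le hcoco
  have hargmin : {x | ∀ y, U x ≤ U y} = U ⁻¹' Set.Iic (U x₀) :=
    Set.ext fun x => ⟨fun hx => hx x₀, fun hx y => hx.trans (hx₀ y)⟩
  have hintβ (β : ℝ) (hβ : 1 ≤ β) : Integrable (fun x => Real.exp (-β * U x)) :=
    integrable_exp_neg_mul_of_one_le hx₀ hint hβ
  refine ⟨⟨x₀, hx₀⟩, hargmin ▸ hU.isCompact_preimage_Iic_of_tendsto_cocompact hcoco _,
    hintβ, fun β hβ => isProbabilityMeasure_tilted (hintβ β hβ), fun O hO hargminO => ?_⟩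
  obtain ⟨c, hx₀c, hc⟩ := hO.isClosed_compl.exists_gt_forall_le_of_tendsto_cocompact
    hU.continuousOn hcoco fun x hx => lt_of_not_ge fun h => hx (hargminO (hargmin ▸ h))
  obtain ⟨r, hr, hball⟩ := Metric.isOpen_iff.mp (isOpen_lt hU continuous_const) x₀
    (show U x₀ < (U x₀ + c) / 2 by linarith)
  exact tendsto_tilted_neg_mul_apply_atTop hx₀ hint hO.isClosed_compl.measurableSet hc
    measurableSet_ball (Metric.measure_ball_pos _ _ hr).ne' measure_ball_lt_top.ne
    (fun x hx => (hball hx).le) (by linarith)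
end

section
/- Let σ be the standard semicircle probability distribution on [−2, 2], with density σ(x) = √(4 − x²)/(2π). Fix κ* ∈ (0, 1), and for κ ∈ (κ*, 1] let ω̃(κ) ∈ [−2, 2] be the unique solution of σ([ω̃(κ), 2]) = (κ − κ*)/(1 − κ*), and define the interpolation threshold α_inter(κ, κ*) = κ* − κ*²/2 + ((1 − κ*)²/2) ∫_{max(0, ω̃(κ))}^{2} x² dσ(x). Then α_inter(κ, κ*) = (1/2)(1/2 + κ* − κ*²/2) if and only if κ ≥ (1 + κ*)/2, and κ ↦ α_inter(κ, κ*) is strictly increasing on (κ*, (1 + κ*)/2]. -/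
/-!
The tail mass `t ↦ σ([t, 2])` is strictly decreasing on `[-2, 2]` and equals `1/2` at `t = 0`, so
the quantile `ω̃(κ)` is strictly decreasing in `κ` and is `≤ 0` exactly when
`(κ - κ*)/(1 - κ*) ≥ 1/2`, i.e. `κ ≥ (1 + κ*)/2`. The tail second moment `t ↦ ∫_t^2 x² dσ` is
strictly decreasing on `[0, 2]` and equals `1/2` at `t = 0` (both values come from explicit
antiderivatives). Hence `α_inter` takes the constant value exactly when `max 0 ω̃(κ) = 0`, and it
increases strictly with `κ` while `ω̃(κ) ≥ 0`.
-/

open Set Real intervalIntegral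

lemma strictAntiOn_intervalIntegral_left {f : ℝ → ℝ} {a b c : ℝ} (hf : Continuous f)
    (hpos : ∀ x ∈ Ioo a b, 0 < f x) : StrictAntiOn (fun t ↦ ∫ x in t..c, f x) (Icc a b) := by
  intro s hs t ht hst
  have hsplit := integral_add_adjacent_intervals
    (hf.intervalIntegrable (μ := MeasureTheory.volume) s t) (hf.intervalIntegrable t c)
  have hmid : 0 < ∫ x in s..t, f x := intervalIntegral_pos_of_pos_on
    (hf.intervalIntegrable s t) (fun x hx ↦ hpos x ⟨hs.1.trans_lt hx.1, hx.2.trans_le ht.2⟩) hst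
  simp only
  linarith

lemma hasDerivAt_sqrt_four_sub_sq {x : ℝ} (hx : x ∈ Ioo (-2 : ℝ) 2) :
    HasDerivAt (fun y ↦ √(4 - y ^ 2)) (-x / √(4 - x ^ 2)) x := by
  have h4 : 4 - x ^ 2 ≠ 0 := by nlinarith [hx.1, hx.2]
  convert (((hasDerivAt_pow 2 x).const_sub 4).sqrt h4) using 1
  field_simp
  ring

lemma hasDerivAt_two_mul_arcsin_half {x : ℝ} (hx : x ∈ Ioo (-2 : ℝ) 2) :
    HasDerivAt (fun y ↦ 2 * arcsin (y / 2)) (2 / √(4 - x ^ 2)) x := by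
  have h1 : x / 2 ≠ -1 := by intro h; linarith [hx.1]
  have h2 : x / 2 ≠ 1 := by intro h; linarith [hx.2]
  have hsqrt : √(1 - (x / 2) ^ 2) = √(4 - x ^ 2) / 2 := by
    rw [show 1 - (x / 2) ^ 2 = (4 - x ^ 2) / 2 ^ 2 by ring, sqrt_div' _ (by positivity),
      sqrt_sq zero_le_two]
  refine (((hasDerivAt_arcsin h1 h2).comp x ((hasDerivAt_id x).div_const 2)).const_mul 2
    ).congr_deriv ?_
  rw [hsqrt]
  field_simp

lemma hasDerivAt_antideriv_sqrt_four_sub_sq {x : ℝ} (hx : x ∈ Ioo (-2 : ℝ) 2) :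
    HasDerivAt (fun y ↦ y * √(4 - y ^ 2) / 2 + 2 * arcsin (y / 2)) (√(4 - x ^ 2)) x := by
  have hpos : 0 < √(4 - x ^ 2) := sqrt_pos.2 (by nlinarith [hx.1, hx.2])
  have hsq : √(4 - x ^ 2) ^ 2 = 4 - x ^ 2 := sq_sqrt (by nlinarith [hx.1, hx.2])
  refine ((((hasDerivAt_id x).mul (hasDerivAt_sqrt_four_sub_sq hx)).div_const 2).add
    (hasDerivAt_two_mul_arcsin_half hx)).congr_deriv ?_
  simp only [id]
  field_simp
  linear_combination -hsq

lemma hasDerivAt_antideriv_sq_mul_sqrt_four_sub_sq {x : ℝ} (hx : x ∈ Ioo (-2 : ℝ) 2) :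
    HasDerivAt (fun y ↦ y * (y ^ 2 - 2) * √(4 - y ^ 2) / 4 + 2 * arcsin (y / 2))
      (x ^ 2 * √(4 - x ^ 2)) x := by
  have hpos : 0 < √(4 - x ^ 2) := sqrt_pos.2 (by nlinarith [hx.1, hx.2])
  have hsq : √(4 - x ^ 2) ^ 2 = 4 - x ^ 2 := sq_sqrt (by nlinarith [hx.1, hx.2])
  have hpoly : HasDerivAt (fun y ↦ y * (y ^ 2 - 2)) (3 * x ^ 2 - 2) x := by
    refine ((hasDerivAt_id x).mul ((hasDerivAt_pow 2 x).sub_const 2)).congr_deriv ?_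
    simp only [id, Nat.cast_ofNat]
    ring
  refine (((hpoly.mul (hasDerivAt_sqrt_four_sub_sq hx)).div_const 4).add
    (hasDerivAt_two_mul_arcsin_half hx)).congr_deriv ?_
  field_simp
  linear_combination (-(x ^ 2 + 2)) * hsq

lemma integral_sqrt_four_sub_sq_zero_two : ∫ x in (0 : ℝ)..2, √(4 - x ^ 2) = π := by
  rw [integral_eq_sub_of_hasDeriv_right_of_le zero_le_two (by fun_prop)
    (fun x hx ↦ (hasDerivAt_antideriv_sqrt_four_sub_sq
      ⟨by linarith [hx.1], hx.2⟩).hasDerivWithinAt)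
    ((by fun_prop : Continuous _).intervalIntegrable _ _)]
  norm_num
  ring

lemma integral_sq_mul_sqrt_four_sub_sq_zero_two :
    ∫ x in (0 : ℝ)..2, x ^ 2 * √(4 - x ^ 2) = π := by
  rw [integral_eq_sub_of_hasDeriv_right_of_le zero_le_two (by fun_prop)
    (fun x hx ↦ (hasDerivAt_antideriv_sq_mul_sqrt_four_sub_sq
      ⟨by linarith [hx.1], hx.2⟩).hasDerivWithinAt)
    ((by fun_prop : Continuous _).intervalIntegrable _ _)]
  norm_num
  ring

noncomputable def semicircleDensity (x : ℝ) : ℝ := √(4 - x ^ 2) / (2 * π)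

/-- `σ([t, 2])`. -/
noncomputable def semicircleTail (t : ℝ) : ℝ := ∫ x in t..2, semicircleDensity x

noncomputable def semicircleSecondMomentTail (t : ℝ) : ℝ :=
  ∫ x in t..2, x ^ 2 * semicircleDensity x

/-- `α_inter(κ, κ*)` as a function of `κ* = ks` and of the quantile `ω = ω̃(κ)`. -/
noncomputable def interpolationThreshold (ks ω : ℝ) : ℝ :=
  ks - ks ^ 2 / 2 + ((1 - ks) ^ 2 / 2) * semicircleSecondMomentTail (max 0 ω)

lemma continuous_semicircleDensity : Continuous semicircleDensity := by
  unfold semicircleDensity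
  fun_prop

lemma semicircleDensity_pos {x : ℝ} (hx : x ∈ Ioo (-2 : ℝ) 2) : 0 < semicircleDensity x :=
  div_pos (sqrt_pos.2 (by nlinarith [hx.1, hx.2])) (by positivity)

lemma semicircleTail_zero : semicircleTail 0 = 1 / 2 := by
  simp_rw [semicircleTail, semicircleDensity]
  rw [integral_div, integral_sqrt_four_sub_sq_zero_two]
  field_simp

lemma semicircleSecondMomentTail_zero : semicircleSecondMomentTail 0 = 1 / 2 := by
  simp_rw [semicircleSecondMomentTail, semicircleDensity, ← mul_div_assoc]
  rw [integral_div, integral_sq_mul_sqrt_four_sub_sq_zero_two]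
  field_simp

lemma semicircleTail_strictAntiOn : StrictAntiOn semicircleTail (Icc (-2) 2) :=
  strictAntiOn_intervalIntegral_left continuous_semicircleDensity
    fun _ hx ↦ semicircleDensity_pos hx

lemma semicircleSecondMomentTail_strictAntiOn :
    StrictAntiOn semicircleSecondMomentTail (Icc 0 2) :=
  strictAntiOn_intervalIntegral_left ((continuous_pow 2).mul continuous_semicircleDensity)
    fun _ hx ↦ mul_pos (pow_pos hx.1 2) (semicircleDensity_pos ⟨by linarith [hx.1], hx.2⟩)

lemma interpolationThreshold_eq_iff {ks ω : ℝ} (hks : ks ≠ 1) (hω : ω ≤ 2) :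
    interpolationThreshold ks ω = 1 / 2 * (1 / 2 + ks - ks ^ 2 / 2) ↔ ω ≤ 0 := by
  have hc : (1 - ks) ^ 2 / 2 ≠ 0 := by
    have : 1 - ks ≠ 0 := sub_ne_zero.2 hks.symm
    positivity
  have hconst : 1 / 2 * (1 / 2 + ks - ks ^ 2 / 2) = interpolationThreshold ks 0 := by
    rw [interpolationThreshold, max_self, semicircleSecondMomentTail_zero]
    ring
  have hmem : max 0 ω ∈ Icc (0 : ℝ) 2 := ⟨le_max_left 0 ω, max_le zero_le_two hω⟩
  rw [hconst, interpolationThreshold, interpolationThreshold, add_right_inj, mul_right_inj' hc,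
    max_self, semicircleSecondMomentTail_strictAntiOn.eq_iff_eq hmem ⟨le_rfl, zero_le_two⟩,
    eq_comm, max_eq_left_iff]

lemma interpolationThreshold_strictAntiOn {ks : ℝ} (hks : ks ≠ 1) :
    StrictAntiOn (interpolationThreshold ks) (Icc 0 2) := by
  intro a ha b hb hab
  have hc : 0 < (1 - ks) ^ 2 / 2 := by
    have : 1 - ks ≠ 0 := sub_ne_zero.2 hks.symm
    positivity
  rw [interpolationThreshold, interpolationThreshold, max_eq_right ha.1, max_eq_right hb.1]
  exact add_lt_add_right (mul_lt_mul_of_pos_left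
    (semicircleSecondMomentTail_strictAntiOn ha hb hab) hc) _

section SemicircleQuantile

variable {ks : ℝ} {w : ℝ → ℝ} (hks : ks < 1)
  (hw : ∀ k ∈ Ioc ks 1, w k ∈ Icc (-2 : ℝ) 2 ∧ semicircleTail (w k) = (k - ks) / (1 - ks))
include hks hw

lemma semicircleQuantile_nonpos_iff {k : ℝ} (hk : k ∈ Ioc ks 1) :
    w k ≤ 0 ↔ (1 + ks) / 2 ≤ k := by
  obtain ⟨hmem, htail⟩ := hw k hk
  rw [← semicircleTail_strictAntiOn.le_iff_ge ⟨by norm_num, zero_le_two⟩ hmem,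
    semicircleTail_zero, htail, le_div_iff₀ (sub_pos.2 hks)]
  constructor <;> intro <;> linarith

lemma semicircleQuantile_nonneg_iff {k : ℝ} (hk : k ∈ Ioc ks 1) :
    0 ≤ w k ↔ k ≤ (1 + ks) / 2 := by
  obtain ⟨hmem, htail⟩ := hw k hk
  rw [← semicircleTail_strictAntiOn.le_iff_ge hmem ⟨by norm_num, zero_le_two⟩,
    semicircleTail_zero, htail, div_le_iff₀ (sub_pos.2 hks)]
  constructor <;> intro <;> linarith

lemma semicircleQuantile_strictAntiOn : StrictAntiOn w (Ioc ks 1) := by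
  intro a ha b hb hab
  rw [← semicircleTail_strictAntiOn.lt_iff_gt (hw a ha).1 (hw b hb).1, (hw a ha).2, (hw b hb).2]
  exact div_lt_div_of_pos_right (by linarith) (sub_pos.2 hks)

end SemicircleQuantile

/-- **Behavior of the interpolation threshold in the student width.** Let `σ` be the
standard semicircle distribution on `[-2, 2]` (density `x ↦ √(4 - x²)/(2π)`). Fix
`κ* ∈ (0, 1)` and, for `κ ∈ (κ*, 1]`, let `ω̃(κ) ∈ [-2, 2]` be the solution of
`σ([ω̃(κ), 2]) = (κ - κ*)/(1 - κ*)`. Define the interpolation threshold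
`α_inter(κ, κ*) = κ* - κ*²/2 + ((1 - κ*)²/2) ∫_{max(0, ω̃(κ))}^{2} x² dσ(x)`. Then
`α_inter(κ, κ*) = (1/2)(1/2 + κ* - κ*²/2)` iff `κ ≥ (1 + κ*)/2`, and
`κ ↦ α_inter(κ, κ*)` is strictly increasing on `(κ*, (1 + κ*)/2]`. -/
theorem interpolation_threshold_constant_iff_and_strict_mono
    (ks : ℝ) (hks : ks ∈ Ioo (0 : ℝ) 1)
    (w : ℝ → ℝ)
    (hw : ∀ k ∈ Ioc ks 1, w k ∈ Icc (-2 : ℝ) 2 ∧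
      (∫ x in (w k)..2, Real.sqrt (4 - x ^ 2) / (2 * Real.pi)) = (k - ks) / (1 - ks)) :
    (∀ k ∈ Ioc ks 1,
      (ks - ks ^ 2 / 2 + ((1 - ks) ^ 2 / 2) *
          ∫ x in (max 0 (w k))..2, x ^ 2 * (Real.sqrt (4 - x ^ 2) / (2 * Real.pi)))
        = (1 / 2) * (1 / 2 + ks - ks ^ 2 / 2) ↔ (1 + ks) / 2 ≤ k) ∧
    StrictMonoOn
      (fun k => ks - ks ^ 2 / 2 + ((1 - ks) ^ 2 / 2) *
          ∫ x in (max 0 (w k))..2, x ^ 2 * (Real.sqrt (4 - x ^ 2) / (2 * Real.pi)))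
      (Ioc ks ((1 + ks) / 2)) := by
  have hks1 : ks < 1 := hks.2
  have hsub : Ioc ks ((1 + ks) / 2) ⊆ Ioc ks 1 := Ioc_subset_Ioc_right (by linarith)
  refine ⟨fun k hk ↦ ?_, ?_⟩
  · change interpolationThreshold ks (w k) = _ ↔ _
    rw [interpolationThreshold_eq_iff hks1.ne (hw k hk).1.2,
      semicircleQuantile_nonpos_iff hks1 hw hk]
  · have hmaps : MapsTo w (Ioc ks ((1 + ks) / 2)) (Icc 0 2) := fun k hk ↦
      ⟨(semicircleQuantile_nonneg_iff hks1 hw (hsub hk)).2 hk.2, (hw k (hsub hk)).1.2⟩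
    exact (interpolationThreshold_strictAntiOn hks1.ne).comp
      ((semicircleQuantile_strictAntiOn hks1 hw).mono hsub) hmaps
end
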